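/- arXiv:2307.14048 — 8 statements merged into one kernel-verified Lean document; each statement's English description precedes it below -/
import Mathlib

section
/- Let S = {x_i}_{i=1}^∞ and T = {y_i}_{i=1}^∞ be strictly increasing sequences of positive integers such that y_1 = m, m divides every y_i, and x_i ≥ y_i for all i. Then for every integer n ≥ 1, ρ(T; mn) ≥ ρ(S; mn). -/
/-- `rho S n` is the number of partitions of `n` all of whose parts belong to `S`. -/
noncomputable def rho (S : Set ℕ) (n : ℕ) : ℕ :=
  Nat.card {p : n.Partition // ∀ t ∈ p.parts, t ∈ S}

/-!
Replace every part `x i` of a partition of `m n` by `y i` and make up the lost weight with parts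
equal to `m = y 0`; this is possible because `y i ≤ x i` and `m` divides everything in sight.
The map is injective: for `i ≠ 0` the multiplicity of `x i` in the original partition is the
multiplicity of `y i ≠ m` in the image, and then the multiplicity of `x 0` is fixed by the sum.
-/

open Function

namespace Multiset

variable {α : Type*} [DecidableEq α]

theorem sum_map_eq_count_mul_add_sum_map_filter_ne (w : α → ℕ) (a : α) (s : Multiset α) :
    (s.map w).sum = s.count a * w a + ((s.filter (· ≠ a)).map w).sum := by
  conv_lhs => rw [← filter_add_not (· = a) s]
  rw [filter_eq', map_add, sum_add, map_replicate, sum_replicate, smul_eq_mul]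

theorem eq_of_count_ne_eq_of_sum_map_eq {w : α → ℕ} {a : α} (ha : 0 < w a) {s t : Multiset α}
    (hcount : ∀ b ≠ a, s.count b = t.count b) (hsum : (s.map w).sum = (t.map w).sum) :
    s = t := by
  have hfilter : s.filter (· ≠ a) = t.filter (· ≠ a) := ext' fun b => by
    simp only [count_filter]
    split_ifs with hb
    exacts [hcount b hb, rfl]
  have hcount_a : s.count a = t.count a := by
    rw [sum_map_eq_count_mul_add_sum_map_filter_ne w a, hfilter,
      sum_map_eq_count_mul_add_sum_map_filter_ne w a t] at hsum
    exact Nat.eq_of_mul_eq_mul_right ha (by omega)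
  exact ext' fun b => if hb : b = a then hb ▸ hcount_a else hcount b hb

end Multiset

theorem Multiset.map_map_invFun_of_forall_mem_range {α β : Type*} [Nonempty α] {f : α → β}
    {s : Multiset β} (hs : ∀ b ∈ s, b ∈ Set.range f) : (s.map (invFun f)).map f = s := by
  rw [Multiset.map_map]
  conv_rhs => rw [← Multiset.map_id s]
  exact Multiset.map_congr rfl fun b hb => invFun_eq (hs b hb)

open Multiset

def padParts (m N : ℕ) (s : Multiset ℕ) : Multiset ℕ :=
  s + replicate ((N - s.sum) / m) m

section padParts

variable {m N : ℕ} {s : Multiset ℕ}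

theorem sum_padParts (hle : s.sum ≤ N) (hdvd : m ∣ N - s.sum) : (padParts m N s).sum = N := by
  rw [padParts, sum_add, sum_replicate, smul_eq_mul, Nat.div_mul_cancel hdvd]
  omega

theorem mem_or_eq_of_mem_padParts {t : ℕ} (ht : t ∈ padParts m N s) : t ∈ s ∨ t = m :=
  (mem_add.1 ht).imp_right eq_of_mem_replicate

theorem count_padParts_of_ne {t : ℕ} (ht : t ≠ m) : (padParts m N s).count t = s.count t := by
  rw [padParts, count_add, count_replicate, if_neg ht.symm, add_zero]

end padParts

section relabel

variable {x y : ℕ → ℕ} {N : ℕ}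

noncomputable def relabelParts (x y : ℕ → ℕ) (N : ℕ) (s : Multiset ℕ) : Multiset ℕ :=
  padParts (y 0) N ((s.map (invFun x)).map y)

theorem count_relabelParts (hy : Injective y) {i : ℕ} (hi : i ≠ 0) (s : Multiset ℕ) :
    (relabelParts x y N s).count (y i) = (s.map (invFun x)).count i := by
  rw [relabelParts, count_padParts_of_ne (hy.ne hi), count_map_eq_count' y _ hy]

theorem sum_map_invFun_map_le (hxy : ∀ i, y i ≤ x i) {s : Multiset ℕ}
    (hs : ∀ t ∈ s, t ∈ Set.range x) : ((s.map (invFun x)).map y).sum ≤ s.sum :=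
  calc ((s.map (invFun x)).map y).sum ≤ ((s.map (invFun x)).map x).sum :=
        sum_map_le_sum_map _ _ fun i _ => hxy i
    _ = s.sum := by rw [map_map_invFun_of_forall_mem_range hs]

noncomputable def relabelPartition (hypos : ∀ i, 0 < y i) (hxy : ∀ i, y i ≤ x i)
    (hdvd : ∀ i, y 0 ∣ y i) (hN : y 0 ∣ N)
    (p : {p : N.Partition // ∀ t ∈ p.parts, t ∈ Set.range x}) :
    {q : N.Partition // ∀ t ∈ q.parts, t ∈ Set.range y} where
  val :=
    { parts := relabelParts x y N p.1.parts
      parts_pos := fun ht => by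
        rcases mem_or_eq_of_mem_padParts ht with ht | rfl
        · obtain ⟨i, -, rfl⟩ := mem_map.1 ht
          exact hypos i
        · exact hypos 0
      parts_sum := by
        have hle := p.1.parts_sum ▸ sum_map_invFun_map_le hxy p.2
        exact sum_padParts hle (Nat.dvd_sub hN (dvd_sum fun t ht => by
          obtain ⟨i, -, rfl⟩ := mem_map.1 ht
          exact hdvd i)) }
  property t ht := by
    rcases mem_or_eq_of_mem_padParts ht with ht | rfl
    · obtain ⟨i, -, rfl⟩ := mem_map.1 ht
      exact ⟨i, rfl⟩
    · exact ⟨0, rfl⟩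

theorem relabelPartition_injective (hy : Injective y) (hx0 : 0 < x 0)
    (hypos : ∀ i, 0 < y i) (hxy : ∀ i, y i ≤ x i) (hdvd : ∀ i, y 0 ∣ y i) (hN : y 0 ∣ N) :
    Injective (relabelPartition hypos hxy hdvd hN) := by
  rintro ⟨p, hp⟩ ⟨q, hq⟩ h
  have hparts : relabelParts x y N p.parts = relabelParts x y N q.parts :=
    congrArg (·.1.parts) h
  have hindices : p.parts.map (invFun x) = q.parts.map (invFun x) :=
    eq_of_count_ne_eq_of_sum_map_eq hx0
      (fun i hi => by rw [← count_relabelParts hy hi, hparts, count_relabelParts hy hi])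
      (by rw [map_map_invFun_of_forall_mem_range hp, map_map_invFun_of_forall_mem_range hq,
        p.parts_sum, q.parts_sum])
  refine Subtype.ext (Nat.Partition.ext ?_)
  rw [← map_map_invFun_of_forall_mem_range hp, hindices, map_map_invFun_of_forall_mem_range hq]

end relabel

theorem base_injection_general (m : ℕ) (x y : ℕ → ℕ)
    (hymono : StrictMono y)
    (hxpos : ∀ i, 0 < x i) (hypos : ∀ i, 0 < y i)
    (hy1 : y 0 = m) (hdvd : ∀ i, m ∣ y i) (hxy : ∀ i, y i ≤ x i)
    (n : ℕ) :
    rho (Set.range x) (m * n) ≤ rho (Set.range y) (m * n) := by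
  subst hy1
  exact Nat.card_le_card_of_injective _
    (relabelPartition_injective hymono.injective (hxpos 0) hypos hxy hdvd (dvd_mul_right _ n))

theorem base_injection (m : ℕ) (x y : ℕ → ℕ)
    (hxmono : StrictMono x) (hymono : StrictMono y)
    (hxpos : ∀ i, 0 < x i) (hypos : ∀ i, 0 < y i)
    (hy1 : y 0 = m) (hdvd : ∀ i, m ∣ y i) (hxy : ∀ i, y i ≤ x i)
    (n : ℕ) (hn : 1 ≤ n) :
    rho (Set.range x) (m * n) ≤ rho (Set.range y) (m * n) :=
  base_injection_general m x y hymono hxpos hypos hy1 hdvd hxy n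
end

section
/- Let a ≥ 1, d ≥ 1, and n ≥ d + 2a. Then q_d^{(a)}(n) ≥ q_{⌈d/a⌉}^{(1)}(⌈n/a⌉). -/
/-!
Write `D = ⌈d / a⌉`, `m = ⌈n / a⌉` and `a * m = n + r` with `r < a`, and encode partitions into
distinct parts by finsets. A partition `S` of `m` with gaps `≥ D` is sent to a partition of `n`
with parts `≥ a` and gaps `≥ d` by multiplying every part by `a` and then taking `r` off a single
part: off the least part when it stays `≥ a`; otherwise (`r ≠ 0` and `1 ∈ S`) the part `1` is
first merged into the largest part and `r` is taken off that largest part. The one exception is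
`S = {1, m - 1}`, sent to `{a, n - a}`, whose gap `n - 2a ≥ d` is where `n ≥ d + 2a` enters.
Rounding every part up to a multiple of `a` recovers `S`, or `S` with the part `1` merged, and
in the second case the lowered part is the largest instead of the least one; hence the map is
injective.
-/

/-- `qNum a d n` is the number of partitions of `n` into parts each at least `a`
in which any two parts differ by at least `d`. -/
noncomputable def qNum (a d n : ℕ) : ℕ :=
  Nat.card {p : n.Partition //
    (∀ x ∈ p.parts, a ≤ x) ∧
    p.parts.Pairwise (fun x y => d ≤ max x y - min x y)}

namespace ChangeLevel

def gapSets (a d n : ℕ) : Set (Finset ℕ) :=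
  {S | (∀ x ∈ S, a ≤ x) ∧ (∀ x ∈ S, ∀ y ∈ S, x < y → x + d ≤ y) ∧ ∑ x ∈ S, x = n}

lemma pairwise_gap_iff {d : ℕ} (hd : 1 ≤ d) (s : Multiset ℕ) :
    s.Pairwise (fun x y => d ≤ max x y - min x y) ↔
      s.Nodup ∧ ∀ x ∈ s, ∀ y ∈ s, x < y → x + d ≤ y := by
  have : Std.Symm (fun x y : ℕ => d ≤ max x y - min x y) :=
    ⟨fun x y h => by rwa [max_comm, min_comm]⟩
  constructor
  · intro hs
    refine ⟨Multiset.nodup_iff_pairwise.2 ?_, fun x hx y hy hxy => ?_⟩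
    · obtain ⟨l, rfl, hl⟩ := hs
      exact ⟨l, rfl, hl.imp fun h he => by subst he; omega⟩
    · have := hs.forall hx hy hxy.ne
      omega
  · rintro ⟨hnd, hgap⟩
    refine hnd.pairwise fun x hx y hy hxy => ?_
    rcases hxy.lt_or_gt with h | h
    · have := hgap x hx y hy h
      omega
    · have := hgap y hy x hx h
      omega

lemma qNum_eq_ncard_gapSets {a d : ℕ} (ha : 1 ≤ a) (hd : 1 ≤ d) (n : ℕ) :
    qNum a d n = (gapSets a d n).ncard := by
  rw [qNum, ← Nat.card_coe_set_eq]
  refine Nat.card_congr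
    { toFun := fun p => ⟨p.1.parts.toFinset, ?_⟩
      invFun := fun S => ⟨⟨S.1.val, fun hi => ?_, ?_⟩, ?_⟩
      left_inv := fun p => ?_
      right_inv := fun S => ?_ }
  · obtain ⟨p, hpa, hpgap⟩ := p
    rw [pairwise_gap_iff hd] at hpgap
    have hval : p.parts.toFinset.val = p.parts := by
      rw [Multiset.toFinset_val, Multiset.dedup_eq_self.2 hpgap.1]
    refine ⟨fun x hx => hpa x (Multiset.mem_toFinset.1 hx),
      fun x hx y hy => hpgap.2 x (Multiset.mem_toFinset.1 hx) y (Multiset.mem_toFinset.1 hy), ?_⟩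
    rw [Finset.sum_eq_multiset_sum, hval, Multiset.map_id', p.parts_sum]
  · exact ha.trans (S.2.1 _ hi)
  · simpa only [Finset.sum_eq_multiset_sum, Multiset.map_id'] using S.2.2.2
  · exact ⟨S.2.1, (pairwise_gap_iff hd _).2 ⟨S.1.nodup, S.2.2.1⟩⟩
  · obtain ⟨p, hpa, hpgap⟩ := p
    ext1; ext1
    simpa [Multiset.dedup_eq_self] using ((pairwise_gap_iff hd _).1 hpgap).1
  · simp

lemma gapSets_finite (a d n : ℕ) : (gapSets a d n).Finite :=
  (Finset.range (n + 1)).powerset.finite_toSet.subset fun _ hS =>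
    Finset.mem_powerset.2 fun _ hx => Finset.mem_range_succ_iff.2 <|
      hS.2.2 ▸ Finset.single_le_sum (f := fun x => x) (fun _ _ => Nat.zero_le _) hx

def lowerAt (a r c : ℕ) (U : Finset ℕ) : Finset ℕ :=
  U.image fun x => if x = c then a * x - r else a * x

variable {a r c d D m n : ℕ} {S U : Finset ℕ}

lemma mul_sub_ne_mul (hr0 : 0 < r) (hr : r < a) (hc : 1 ≤ c) (x : ℕ) : a * c - r ≠ a * x := by
  intro h
  rcases lt_or_ge x c with hxc | hxc
  · have : a * (x + 1) ≤ a * c := Nat.mul_le_mul_left a hxc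
    rw [mul_add_one] at this
    omega
  · have : a * c ≤ a * x := Nat.mul_le_mul_left a hxc
    have : a ≤ a * c := Nat.le_mul_of_pos_right a hc
    omega

lemma image_ceilDiv_lowerAt (hr : r < a) (U : Finset ℕ) :
    (lowerAt a r c U).image (fun y => (y + a - 1) / a) = U := by
  rw [lowerAt, Finset.image_image]
  convert Finset.image_id (s := U)
  funext x
  simp only [Function.comp, id]
  refine Nat.div_eq_of_lt_le ?_ ?_ <;> rw [Nat.mul_comm] <;> split_ifs
  all_goals first | omega | (rw [add_one_mul]; omega)

lemma injOn_lowerAt (hr : r < a) (hc : 1 ≤ c) :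
    Set.InjOn (fun x => if x = c then a * x - r else a * x) U := by
  intro x _ y _ hxy
  have ha : 0 < a := by omega
  rcases Nat.eq_zero_or_pos r with rfl | hr0
  · simpa [Nat.mul_left_cancel_iff ha] using hxy
  simp only at hxy
  split_ifs at hxy with hx hy hy
  · rw [hx, hy]
  · exact absurd hxy (mul_sub_ne_mul hr0 hr (hx ▸ hc) y)
  · exact absurd hxy.symm (mul_sub_ne_mul hr0 hr (hy ▸ hc) x)
  · exact Nat.eq_of_mul_eq_mul_left ha hxy

lemma sum_lowerAt_add (hr : r < a) (hcU : c ∈ U) (hc : 1 ≤ c) :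
    ∑ y ∈ lowerAt a r c U, y + r = a * ∑ x ∈ U, x := by
  rw [lowerAt, Finset.sum_image (injOn_lowerAt hr hc), ← Finset.add_sum_erase _ _ hcU,
    ← Finset.add_sum_erase _ _ hcU, if_pos rfl,
    Finset.sum_congr rfl fun x hx => if_neg (Finset.ne_of_mem_erase hx), mul_add, Finset.mul_sum,
    add_right_comm, Nat.sub_add_cancel (hr.le.trans (Nat.le_mul_of_pos_right a hc))]

lemma eq_of_lowerAt_eq {c' : ℕ} (hr0 : 0 < r) (hr : r < a) (hcU : c ∈ U) (hc : 1 ≤ c)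
    (hc' : 1 ≤ c') (h : lowerAt a r c U = lowerAt a r c' U) : c = c' := by
  have hmem : a * c - r ∈ lowerAt a r c' U := h ▸ Finset.mem_image.2 ⟨c, hcU, if_pos rfl⟩
  obtain ⟨x, -, hx⟩ := Finset.mem_image.1 hmem
  split_ifs at hx with hxc
  · subst hxc
    have : a ≤ a * c := Nat.le_mul_of_pos_right a hc
    have : a ≤ a * x := Nat.le_mul_of_pos_right a hc'
    have : a * c = a * x := by omega
    exact Nat.eq_of_mul_eq_mul_left (by omega) this
  · exact absurd hx.symm (mul_sub_ne_mul hr0 hr hc x)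

lemma add_le_of_mem_image {f : ℕ → ℕ} (hf : ∀ x ∈ U, ∀ y ∈ U, x < y → f x + d ≤ f y) :
    ∀ u ∈ U.image f, ∀ v ∈ U.image f, u < v → u + d ≤ v := by
  simp only [Finset.mem_image]
  rintro _ ⟨x, hx, rfl⟩ _ ⟨y, hy, rfl⟩ huv
  rcases lt_trichotomy x y with hxy | rfl | hxy
  · exact hf x hx y hy hxy
  · exact absurd huv (lt_irrefl _)
  · have := hf y hy x hx hxy
    omega

lemma lowerAt_mem_gapSets (hr : r < a) (hdD : d ≤ a * D) (hn : a * m = n + r)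
    (hU : U ∈ gapSets 1 D m) (hcU : c ∈ U) (hac : a + r ≤ a * c)
    (hbelow : ∀ x ∈ U, x < c → a * x + d + r ≤ a * c) :
    lowerAt a r c U ∈ gapSets a d n := by
  obtain ⟨hpos, hsep, hsum⟩ := hU
  refine ⟨?_, add_le_of_mem_image fun x hx y hy hxy => ?_, ?_⟩
  · simp only [lowerAt, Finset.mem_image]
    rintro _ ⟨x, hx, rfl⟩
    split_ifs with hxc
    · subst hxc
      omega
    · exact Nat.le_mul_of_pos_right a (hpos x hx)
  · have hscaled := Nat.mul_le_mul_left a (hsep x hx y hy hxy)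
    rw [mul_add] at hscaled
    split_ifs with hxc hyc hyc
    · omega
    · omega
    · subst hyc
      exact Nat.le_sub_of_add_le (hbelow x hx hxy)
    · omega
  · have := sum_lowerAt_add hr hcU (hpos c hcU)
    rw [hsum] at this
    omega

noncomputable def mergeOne (S : Finset ℕ) : Finset ℕ :=
  insert (sSup ↑S + 1) ((S.erase 1).erase (sSup ↑S))

lemma le_sSup_of_mem {x : ℕ} (hx : x ∈ S) : x ≤ sSup (S : Set ℕ) := le_csSup S.bddAbove hx

lemma sSup_mergeOne (S : Finset ℕ) : sSup (mergeOne S : Set ℕ) = sSup ↑S + 1 := by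
  refine IsGreatest.csSup_eq ⟨by simp [mergeOne], fun x hx => ?_⟩
  simp only [mergeOne, Finset.coe_insert, Set.mem_insert_iff, Finset.mem_coe,
    Finset.mem_erase] at hx
  rcases hx with rfl | ⟨-, -, hx⟩
  · rfl
  · exact (le_sSup_of_mem hx).trans (Nat.le_succ _)

lemma one_notMem_mergeOne (h1 : 1 ∈ S) : 1 ∉ mergeOne S := by
  have := le_sSup_of_mem h1
  simp only [mergeOne, Finset.mem_insert, Finset.mem_erase]
  omega

lemma injOn_mergeOne : Set.InjOn mergeOne {S | 1 ∈ S} := by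
  have hinv : ∀ S : Finset ℕ, 1 ∈ S →
      insert 1 (insert (sSup (mergeOne S : Set ℕ) - 1)
        ((mergeOne S).erase (sSup (mergeOne S : Set ℕ)))) = S := by
    intro S h1
    have hμ : sSup (S : Set ℕ) ∈ S := Finset.Nonempty.csSup_mem ⟨1, h1⟩
    have hμ1 : sSup ↑S + 1 ∉ (S.erase 1).erase (sSup ↑S) := fun h =>
      absurd (le_sSup_of_mem (Finset.mem_of_mem_erase (Finset.mem_of_mem_erase h))) (by omega)
    rw [sSup_mergeOne, Nat.add_sub_cancel, mergeOne, Finset.erase_insert hμ1]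
    ext x
    simp only [Finset.mem_insert, Finset.mem_erase]
    grind
  intro S hS S' hS' h
  rw [← hinv S hS, ← hinv S' hS', h]

lemma exists_mem_lt_sSup (h1 : 1 ∈ S) (hS : S ≠ {1, sSup ↑S}) :
    ∃ x ∈ S, x ≠ 1 ∧ x < sSup ↑S := by
  by_contra! hcon
  refine hS (Finset.Subset.antisymm (fun x hx => ?_) ?_)
  · have := hcon x hx
    have := le_sSup_of_mem hx
    simp only [Finset.mem_insert, Finset.mem_singleton]
    omega
  · exact Finset.insert_subset h1
      (Finset.singleton_subset_iff.2 (Finset.Nonempty.csSup_mem ⟨1, h1⟩))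

lemma add_le_of_mem_mergeOne (hS : S ∈ gapSets 1 D m) {x : ℕ} (hx : x ∈ mergeOne S)
    (hxμ : x < sSup ↑S + 1) : x + (D + 1) ≤ sSup ↑S + 1 := by
  simp only [mergeOne, Finset.mem_insert, Finset.mem_erase] at hx
  rcases hx with rfl | ⟨hxμ', -, hxS⟩
  · omega
  · have := hS.2.1 x hxS _ (Finset.Nonempty.csSup_mem ⟨x, hxS⟩) (by omega)
    omega

lemma mergeOne_mem_gapSets (hS : S ∈ gapSets 1 D m) (h1 : 1 ∈ S) (hμ : 1 < sSup (S : Set ℕ)) :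
    mergeOne S ∈ gapSets 1 D m := by
  obtain ⟨hpos, hsep, hsum⟩ := id hS
  have hμS : sSup (S : Set ℕ) ∈ S := Finset.Nonempty.csSup_mem ⟨1, h1⟩
  have hμ1 : sSup ↑S + 1 ∉ (S.erase 1).erase (sSup ↑S) := fun h =>
    absurd (le_sSup_of_mem (Finset.mem_of_mem_erase (Finset.mem_of_mem_erase h))) (by omega)
  refine ⟨fun x hx => ?_, fun x hx y hy hxy => ?_, ?_⟩
  · simp only [mergeOne, Finset.mem_insert, Finset.mem_erase] at hx
    rcases hx with rfl | ⟨-, -, hx⟩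
    · omega
    · exact hpos x hx
  · have hyμ : y ≤ sSup ↑S + 1 := sSup_mergeOne S ▸ le_sSup_of_mem hy
    have hxM : x ∈ (S.erase 1).erase (sSup ↑S) :=
      (Finset.mem_insert.1 hx).resolve_left (by omega)
    rcases (Finset.mem_insert.1 hy) with rfl | hyM
    · have := add_le_of_mem_mergeOne hS hx hxy
      omega
    · exact hsep x (Finset.mem_of_mem_erase (Finset.mem_of_mem_erase hxM))
        y (Finset.mem_of_mem_erase (Finset.mem_of_mem_erase hyM)) hxy
  · rw [mergeOne, Finset.sum_insert hμ1, ← hsum, ← Finset.add_sum_erase _ _ h1,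
      ← Finset.add_sum_erase _ _ (Finset.mem_erase.2 ⟨by omega, hμS⟩)]
    omega

noncomputable def lift (a r : ℕ) (S : Finset ℕ) : Finset ℕ :=
  if r = 0 ∨ 1 ∉ S then lowerAt a r (sInf ↑S) S
  else if S = {1, sSup ↑S} then lowerAt a r (sSup ↑S) S
  else lowerAt a r (sSup ↑S + 1) (mergeOne S)

lemma image_ceilDiv_lift (hr : r < a) (S : Finset ℕ) :
    (lift a r S).image (fun y => (y + a - 1) / a) =
      if r ≠ 0 ∧ 1 ∈ S ∧ S ≠ {1, sSup ↑S} then mergeOne S else S := by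
  unfold lift
  split_ifs <;> first | exact image_ceilDiv_lowerAt hr _ | tauto

lemma lowerAt_sInf_mem_gapSets (hr : r < a) (hdD : d ≤ a * D) (hn : a * m = n + r)
    (hS : S ∈ gapSets 1 D m) (hne : S.Nonempty) (hA : r = 0 ∨ 1 ∉ S) :
    lowerAt a r (sInf ↑S) S ∈ gapSets a d n := by
  refine lowerAt_mem_gapSets hr hdD hn hS hne.csInf_mem ?_
    fun x hx hlt => absurd (Nat.sInf_le (Finset.mem_coe.2 hx)) (not_le.2 hlt)
  have hmin : 1 ≤ sInf (S : Set ℕ) := hS.1 _ hne.csInf_mem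
  rcases hA with rfl | h1
  · simpa using Nat.le_mul_of_pos_right a hmin
  · have hmin2 : 2 ≤ sInf (S : Set ℕ) := by
      have : sInf (S : Set ℕ) ≠ 1 := fun h => h1 (h ▸ hne.csInf_mem)
      omega
    have := Nat.mul_le_mul_left a hmin2
    omega

lemma lowerAt_pair_mem_gapSets (hr : r < a) (hdD : d ≤ a * D) (hn : a * m = n + r)
    (hnd : d + 2 * a ≤ n) (hS : S ∈ gapSets 1 D m) (hC : S = {1, sSup ↑S}) :
    lowerAt a r (sSup ↑S) S ∈ gapSets a d n := by
  have h1 : 1 ∈ S := by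
    rw [hC]
    exact Finset.mem_insert_self _ _
  have hsum := hS.2.2
  set μ := sSup (S : Set ℕ)
  have hμ : μ ≠ 1 := by
    intro h
    rw [h, Finset.pair_eq_singleton] at hC
    rw [hC, Finset.sum_singleton] at hsum
    subst hsum
    omega
  rw [hC, Finset.sum_pair (Ne.symm hμ)] at hsum
  have haμ : a * μ + a = n + r := by rw [← hn, ← hsum, mul_add, mul_one, add_comm a]
  refine lowerAt_mem_gapSets hr hdD hn hS (Finset.Nonempty.csSup_mem ⟨1, h1⟩) (by omega)
    fun x hx hlt => ?_
  rw [hC, Finset.mem_insert, Finset.mem_singleton] at hx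
  rcases hx with rfl | rfl
  · omega
  · exact absurd hlt (lt_irrefl _)

lemma lowerAt_mergeOne_mem_gapSets (hr : r < a) (hdD : d ≤ a * D) (hn : a * m = n + r)
    (hS : S ∈ gapSets 1 D m) (h1 : 1 ∈ S) (hC : S ≠ {1, sSup ↑S}) :
    lowerAt a r (sSup ↑S + 1) (mergeOne S) ∈ gapSets a d n := by
  obtain ⟨x, hxS, hx1, hxμ⟩ := exists_mem_lt_sSup h1 hC
  have hμ : 1 < sSup (S : Set ℕ) := by
    have := hS.1 x hxS
    omega
  refine lowerAt_mem_gapSets hr hdD hn (mergeOne_mem_gapSets hS h1 hμ)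
    (Finset.mem_insert_self _ _) ?_ fun y hy hlt => ?_
  · rw [mul_add_one]
    have := Nat.mul_le_mul_left a hμ.le
    omega
  · have := Nat.mul_le_mul_left a (add_le_of_mem_mergeOne hS hy hlt)
    rw [mul_add, mul_add, mul_one] at this
    omega

lemma lift_mem_gapSets (hr : r < a) (hdD : d ≤ a * D) (hn : a * m = n + r)
    (hnd : d + 2 * a ≤ n) (hS : S ∈ gapSets 1 D m) : lift a r S ∈ gapSets a d n := by
  have hne : S.Nonempty := by
    refine Finset.nonempty_of_sum_ne_zero (f := fun x => x) (hS.2.2 ▸ ?_)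
    rintro rfl
    omega
  unfold lift
  split_ifs with hA hC
  · exact lowerAt_sInf_mem_gapSets hr hdD hn hS hne hA
  · exact lowerAt_pair_mem_gapSets hr hdD hn hnd hS hC
  · exact lowerAt_mergeOne_mem_gapSets hr hdD hn hS (by tauto) hC

lemma lift_mergeOne_ne_lift (hr : r < a) (hS : S ∈ gapSets 1 D m) (hr0 : r ≠ 0) (h1 : 1 ∈ S)
    (hC : S ≠ {1, sSup ↑S}) : lift a r (mergeOne S) ≠ lift a r S := by
  obtain ⟨x, hxS, hx1, hxμ⟩ := exists_mem_lt_sSup h1 hC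
  have hμ : 1 < sSup (S : Set ℕ) := by
    have := hS.1 x hxS
    omega
  have hxU : x ∈ mergeOne S := Finset.mem_insert_of_mem
    (Finset.mem_erase.2 ⟨hxμ.ne, Finset.mem_erase.2 ⟨hx1, hxS⟩⟩)
  have hU : (mergeOne S).Nonempty := ⟨x, hxU⟩
  intro h
  rw [lift, if_pos (Or.inr (one_notMem_mergeOne h1)), lift, if_neg (by tauto), if_neg hC] at h
  have hmin := eq_of_lowerAt_eq (Nat.pos_of_ne_zero hr0) hr hU.csInf_mem
    ((mergeOne_mem_gapSets hS h1 hμ).1 _ hU.csInf_mem) (Nat.le_add_left 1 _) h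
  have := Nat.sInf_le (Finset.mem_coe.2 hxU)
  omega

lemma injOn_lift (hr : r < a) : Set.InjOn (lift a r) (gapSets 1 D m) := by
  intro S hS S' hS' h
  have hbase := congrArg (Finset.image fun y => (y + a - 1) / a) h
  simp only [image_ceilDiv_lift hr] at hbase
  by_cases hP : r ≠ 0 ∧ 1 ∈ S ∧ S ≠ {1, sSup ↑S} <;>
    by_cases hP' : r ≠ 0 ∧ 1 ∈ S' ∧ S' ≠ {1, sSup ↑S'}
  · rw [if_pos hP, if_pos hP'] at hbase
    exact injOn_mergeOne hP.2.1 hP'.2.1 hbase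
  · rw [if_pos hP, if_neg hP'] at hbase
    subst hbase
    exact absurd h.symm (lift_mergeOne_ne_lift hr hS hP.1 hP.2.1 hP.2.2)
  · rw [if_neg hP, if_pos hP'] at hbase
    subst hbase
    exact absurd h (lift_mergeOne_ne_lift hr hS' hP'.1 hP'.2.1 hP'.2.2)
  · rwa [if_neg hP, if_neg hP'] at hbase

theorem ncard_gapSets_le (hr : r < a) (hdD : d ≤ a * D) (hn : a * m = n + r)
    (hnd : d + 2 * a ≤ n) : (gapSets 1 D m).ncard ≤ (gapSets a d n).ncard :=
  Set.ncard_le_ncard_of_injOn (lift a r) (fun _ => lift_mem_gapSets hr hdD hn hnd)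
    (injOn_lift hr) (gapSets_finite a d n)

end ChangeLevel

theorem change_level (a d n : ℕ) (ha : 1 ≤ a) (hd : 1 ≤ d) (hn : d + 2 * a ≤ n) :
    qNum 1 ((d + a - 1) / a) ((n + a - 1) / a) ≤ qNum a d n := by
  have hD := Nat.div_add_mod (d + a - 1) a
  have hm := Nat.div_add_mod (n + a - 1) a
  have hDmod := Nat.mod_lt (d + a - 1) ha
  have hmmod := Nat.mod_lt (n + a - 1) ha
  generalize (d + a - 1) / a = D at *
  generalize (n + a - 1) / a = m at *
  generalize (d + a - 1) % a = ρ at *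
  generalize (n + a - 1) % a = σ at *
  have hD1 : 1 ≤ D := Nat.pos_of_ne_zero fun h => by simp only [h, mul_zero] at hD; omega
  rw [ChangeLevel.qNum_eq_ncard_gapSets le_rfl hD1, ChangeLevel.qNum_eq_ncard_gapSets ha hd]
  exact ChangeLevel.ncard_gapSets_le (r := a * m - n) (by omega) (by omega) (by omega) hn
end

section
/- Let d = 2^r − 1 with r ≥ 6. Then for every positive integer n not equal to d, d+1, d+2, or d+3, L_d(n) ≥ Q_{d−2}^{(1)}(n). -/
/-!
Write `Q` for the partitions counted by `QNum 1 (d - 2)`, whose parts are `≡ ±1 mod d + 1`, and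
`L` for those counted by `LNum d 6`. We inject the `Q`-partitions of `n` into the `L`-partitions
of `n`; since the allowed residues of `LNum d r` grow with `r`, this suffices for all `r ≥ 6`.

A `Q`-part `v ≥ d + 2` has the form `v = (2d + 2)t + c` with `c ∈ {d+2, 2d+1, 2d+3, 3d+2}` and is
sent to `2dt + c'` with `c' = d+2, d+32, 2d+1, d+16` respectively, a part of residue
`d+2, d+32, 1, d+16` modulo `2d`; the difference `v - (2dt + c')`, its slack, is paid out in
parts `1`. Parts `1` stay. Parts `d` go in pairs to `d + 8` together with `d - 8` ones, and a
leftover `d` becomes `d + 4` by borrowing four ones. The borrow fails only for a single `d` with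
at most three ones and slack in total; these few partitions are sent to codes containing `d + 4`
twice, or `d + 16` once with at most `d - 11` ones, which no regular code does. A code
determines the number of parts `d` and the parts `≥ d + 2`: an exceptional one through its
multiplicities, a regular one through the multiplicities of `d + 8` and `d + 4` and by decoding
its other parts one by one. The sum then fixes the number of ones. The only `Q`-partitions
without a code are `d + 1 + ⋯ + 1` with at most three ones, hence the excluded values of `n`.
-/

/-- `QNum b d n` is the number of partitions of `n` into parts congruent to
`b` or `-b` modulo `d + 3`. -/
noncomputable def QNum (b d n : ℕ) : ℕ :=
  Nat.card {p : n.Partition //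
    ∀ x ∈ p.parts, x % (d + 3) = b % (d + 3) ∨ (x + b) % (d + 3) = 0}

/-- `LNum d r n` is the number of partitions of `n` into parts congruent to one of
`1, d+2, d+4, d+8, …, d+2^(r-1)` modulo `2d`. -/
noncomputable def LNum (d r n : ℕ) : ℕ :=
  Nat.card {p : n.Partition //
    ∀ x ∈ p.parts, x % (2 * d) = 1 ∨ ∃ j, 1 ≤ j ∧ j ≤ r - 1 ∧ x % (2 * d) = d + 2 ^ j}

namespace PartitionInjection

open Multiset

def IsQPart (d v : ℕ) : Prop := v % (d + 1) = 1 ∨ (v + 1) % (d + 1) = 0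

theorem IsQPart.exists_eq {d v : ℕ} (hv : IsQPart d v) :
    ∃ q, v = (2 * d + 2) * q + 1 ∨ v = (2 * d + 2) * q + d ∨
      v = (2 * d + 2) * q + (d + 2) ∨ v = (2 * d + 2) * q + (2 * d + 1) := by
  rcases hv with hv | hv
  · have hv' := Nat.div_add_mod v (d + 1)
    obtain ⟨s, hs | hs⟩ := Nat.even_or_odd' (v / (d + 1)) <;> rw [hv, hs] at hv' <;>
      refine ⟨s, ?_⟩
    · left; rw [← hv']; ring
    · right; right; left; rw [← hv']; ring
  · obtain ⟨q, hq⟩ := Nat.dvd_of_mod_eq_zero hv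
    obtain ⟨s, rfl | rfl⟩ := Nat.even_or_odd' q
    · obtain _ | s := s
      · omega
      · refine ⟨s, Or.inr (Or.inr (Or.inr ?_))⟩
        have : (d + 1) * (2 * (s + 1)) = (2 * d + 2) * s + (2 * d + 1) + 1 := by ring
        omega
    · refine ⟨s, Or.inr (Or.inl ?_)⟩
      have : (d + 1) * (2 * s + 1) = (2 * d + 2) * s + d + 1 := by ring
      omega

def IsLargeQPart (d v : ℕ) : Prop := IsQPart d v ∧ v ≠ 1 ∧ v ≠ d

def encodePart (d v : ℕ) : ℕ :=
  if v % (2 * d + 2) = d + 2 then 2 * d * (v / (2 * d + 2)) + (d + 2)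
  else if v % (2 * d + 2) = 1 then 2 * d * (v / (2 * d + 2)) + 1
  else if v % (2 * d + 2) = d then 2 * d * (v / (2 * d + 2) - 1) + (d + 16)
  else 2 * d * (v / (2 * d + 2)) + (d + 32)

def decodePart (d y : ℕ) : ℕ :=
  if y % (2 * d) = d + 2 then (2 * d + 2) * (y / (2 * d)) + (d + 2)
  else if y % (2 * d) = 1 then (2 * d + 2) * (y / (2 * d)) + 1
  else if y % (2 * d) = d + 16 then (2 * d + 2) * (y / (2 * d) + 1) + d
  else (2 * d + 2) * (y / (2 * d)) + (2 * d + 1)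

def partShapes (d : ℕ) : List (ℕ × ℕ) :=
  [(d + 2, d + 2), (2 * d + 3, 2 * d + 1), (3 * d + 2, d + 16), (2 * d + 1, d + 32)]

theorem mem_partShapes {d c c' : ℕ} :
    (c, c') ∈ partShapes d ↔ c = d + 2 ∧ c' = d + 2 ∨ c = 2 * d + 3 ∧ c' = 2 * d + 1 ∨
      c = 3 * d + 2 ∧ c' = d + 16 ∨ c = 2 * d + 1 ∧ c' = d + 32 := by
  simp [partShapes]

theorem IsLargeQPart.exists_partShapes {d v : ℕ} (hv : IsLargeQPart d v) :
    ∃ t c c', (c, c') ∈ partShapes d ∧ v = 2 * d * t + 2 * t + c := by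
  obtain ⟨hq, h1, hd⟩ := hv
  obtain ⟨q, rfl | rfl | rfl | rfl⟩ := hq.exists_eq
  · obtain _ | t := q
    · simp at h1
    · exact ⟨t, 2 * d + 3, 2 * d + 1, by simp [partShapes], by ring⟩
  · obtain _ | t := q
    · simp at hd
    · exact ⟨t, 3 * d + 2, d + 16, by simp [partShapes], by ring⟩
  · exact ⟨q, d + 2, d + 2, by simp [partShapes], by ring⟩
  · exact ⟨q, 2 * d + 1, d + 32, by simp [partShapes], by ring⟩

section
variable {d : ℕ} (hd : 35 ≤ d)
include hd

theorem encodePart_eq_and_decodePart_eq {t c c' : ℕ} (hc : (c, c') ∈ partShapes d) :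
    encodePart d (2 * d * t + 2 * t + c) = 2 * d * t + c' ∧
      decodePart d (2 * d * t + c') = 2 * d * t + 2 * t + c := by
  rcases mem_partShapes.1 hc with ⟨rfl, rfl⟩ | ⟨rfl, rfl⟩ | ⟨rfl, rfl⟩ | ⟨rfl, rfl⟩ <;> [
    rw [show 2 * d * t + 2 * t + (d + 2) = (2 * d + 2) * t + (d + 2) by ring];
    rw [show 2 * d * t + 2 * t + (2 * d + 3) = (2 * d + 2) * (t + 1) + 1 by ring,
      show 2 * d * t + (2 * d + 1) = 2 * d * (t + 1) + 1 by ring];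
    rw [show 2 * d * t + 2 * t + (3 * d + 2) = (2 * d + 2) * (t + 1) + d by ring];
    rw [show 2 * d * t + 2 * t + (2 * d + 1) = (2 * d + 2) * t + (2 * d + 1) by ring]]
  all_goals
    simp (disch := omega) only [encodePart, decodePart, Nat.mul_add_mod, Nat.mul_add_div,
      Nat.mod_eq_of_lt, Nat.div_eq_of_lt, if_true, add_zero, and_self, Nat.add_sub_cancel]
    all_goals split_ifs <;> omega

theorem encodePart_d_add_two : encodePart d (d + 2) = d + 2 := by
  simpa using (encodePart_eq_and_decodePart_eq (t := 0) hd (by simp [partShapes])).1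

theorem encodePart_three_mul_add_four : encodePart d (3 * d + 4) = 3 * d + 2 := by
  have := (encodePart_eq_and_decodePart_eq (t := 1) hd (c := d + 2) (c' := d + 2)
    (by simp [partShapes])).1
  rwa [show 2 * d * 1 + 2 * 1 + (d + 2) = 3 * d + 4 by ring,
    show 2 * d * 1 + (d + 2) = 3 * d + 2 by ring] at this

theorem encodePart_two_mul_add_three : encodePart d (2 * d + 3) = 2 * d + 1 := by
  simpa using (encodePart_eq_and_decodePart_eq (t := 0) hd (c := 2 * d + 3) (c' := 2 * d + 1)
    (by simp [partShapes])).1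

variable {v : ℕ} (hv : IsLargeQPart d v)
include hv

theorem decodePart_encodePart : decodePart d (encodePart d v) = v := by
  obtain ⟨t, c, c', hc, rfl⟩ := hv.exists_partShapes
  rw [(encodePart_eq_and_decodePart_eq hd hc).1, (encodePart_eq_and_decodePart_eq hd hc).2]

theorem encodePart_mod :
    encodePart d v % (2 * d) = 1 ∨ encodePart d v % (2 * d) = d + 2 ∨
      encodePart d v % (2 * d) = d + 16 ∨ encodePart d v % (2 * d) = d + 32 := by
  obtain ⟨t, c, c', hc, rfl⟩ := hv.exists_partShapes
  rw [(encodePart_eq_and_decodePart_eq hd hc).1, Nat.mul_add_mod]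
  rcases mem_partShapes.1 hc with ⟨rfl, rfl⟩ | ⟨rfl, rfl⟩ | ⟨rfl, rfl⟩ | ⟨rfl, rfl⟩ <;>
    simp (disch := omega) [Nat.mod_eq_of_lt, Nat.add_mod_left]

theorem encodePart_le : encodePart d v ≤ v := by
  obtain ⟨t, c, c', hc, rfl⟩ := hv.exists_partShapes
  rw [(encodePart_eq_and_decodePart_eq hd hc).1]
  rcases mem_partShapes.1 hc with ⟨rfl, rfl⟩ | ⟨rfl, rfl⟩ | ⟨rfl, rfl⟩ | ⟨rfl, rfl⟩ <;> omega

theorem encodePart_ne : encodePart d v ≠ 1 ∧ encodePart d v ≠ d + 4 ∧ encodePart d v ≠ d + 8 := by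
  obtain ⟨t, c, c', hc, rfl⟩ := hv.exists_partShapes
  rw [(encodePart_eq_and_decodePart_eq hd hc).1]
  rcases mem_partShapes.1 hc with ⟨rfl, rfl⟩ | ⟨rfl, rfl⟩ | ⟨rfl, rfl⟩ | ⟨rfl, rfl⟩ <;>
    rcases t with _ | t <;> simp only [mul_zero, mul_add, mul_one] <;> omega

theorem le_sub_encodePart_of_eq (h : encodePart d v = d + 16) :
    2 * d - 14 ≤ v - encodePart d v := by
  obtain ⟨t, c, c', hc, rfl⟩ := hv.exists_partShapes
  rw [(encodePart_eq_and_decodePart_eq hd hc).1] at h ⊢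
  rcases mem_partShapes.1 hc with ⟨rfl, rfl⟩ | ⟨rfl, rfl⟩ | ⟨rfl, rfl⟩ | ⟨rfl, rfl⟩ <;>
    rcases t with _ | t <;> simp only [mul_zero, mul_add, mul_one] at h ⊢ <;> omega

theorem eq_of_sub_encodePart_le_three (hs : v - encodePart d v ≤ 3) :
    v = d + 2 ∨ (v = 3 * d + 4 ∨ v = 2 * d + 3) ∧ v - encodePart d v = 2 := by
  obtain ⟨t, c, c', hc, rfl⟩ := hv.exists_partShapes
  rw [(encodePart_eq_and_decodePart_eq hd hc).1] at hs ⊢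
  rcases mem_partShapes.1 hc with ⟨rfl, rfl⟩ | ⟨rfl, rfl⟩ | ⟨rfl, rfl⟩ | ⟨rfl, rfl⟩ <;>
    rcases t with _ | _ | t <;>
    simp only [mul_zero, mul_add, mul_one, zero_add, true_or, or_true, true_and] at hs ⊢ <;>
    omega

end

section
variable {α : Type*} [DecidableEq α]

theorem eq_replicate_add_replicate_add_filter {a b : α} (hab : a ≠ b) (s : Multiset α) :
    s = replicate (s.count a) a + replicate (s.count b) b + s.filter (fun v => v ≠ a ∧ v ≠ b) := by
  ext y
  simp only [count_add, count_replicate, count_filter]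
  by_cases hya : y = a <;> by_cases hyb : y = b <;> simp_all [eq_comm]

theorem replicate_count_add_filter_ne (a : α) (s : Multiset α) :
    replicate (s.count a) a + s.filter (· ≠ a) = s := by
  rw [← filter_eq', filter_add_not]

theorem count_filter_replicate_add_of_notMem {a : α} {x : ℕ} {U : Multiset α} (hU : a ∉ U) :
    (replicate x a + U).count a = x ∧ (replicate x a + U).filter (· ≠ a) = U := by
  refine ⟨by simp [count_eq_zero.2 hU], ?_⟩
  rw [filter_add, filter_eq_nil.2 fun y hy h => h (eq_of_mem_replicate hy), zero_add,
    filter_eq_self.2 fun y hy => ne_of_mem_of_not_mem hy hU]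

end

def slack (d : ℕ) (R : Multiset ℕ) : ℕ := (R.map fun v => v - encodePart d v).sum

theorem slack_add (d : ℕ) (R S : Multiset ℕ) : slack d (R + S) = slack d R + slack d S := by
  simp [slack]

theorem slack_replicate_d_add_two {d : ℕ} (hd : 35 ≤ d) (x : ℕ) :
    slack d (replicate x (d + 2)) = 0 := by
  simp [slack, encodePart_d_add_two hd]

theorem sum_eq_sum_map_encodePart_add_slack {d : ℕ} {R : Multiset ℕ}
    (hR : ∀ v ∈ R, encodePart d v ≤ v) : R.sum = (R.map (encodePart d)).sum + slack d R := by
  rw [slack, ← sum_map_add]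
  conv_lhs => rw [← map_id R]
  exact congrArg sum (map_congr rfl fun v hv => by have := hR v hv; simp; omega)

theorem filter_ne_d_add_two_of_slack_le_three {d : ℕ} (hd : 35 ≤ d) {R : Multiset ℕ}
    (hR : ∀ v ∈ R, IsLargeQPart d v) (hs : slack d R ≤ 3) :
    R.filter (· ≠ d + 2) = 0 ∧ slack d R = 0 ∨
      R.filter (· ≠ d + 2) = {3 * d + 4} ∧ slack d R = 2 ∨
      R.filter (· ≠ d + 2) = {2 * d + 3} ∧ slack d R = 2 := by
  set U := R.filter (· ≠ d + 2)
  have hRU : slack d R = slack d U := by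
    rw [← replicate_count_add_filter_ne (d + 2) R, slack_add, slack_replicate_d_add_two hd,
      zero_add]
  have hU : ∀ u ∈ U, (u = 3 * d + 4 ∨ u = 2 * d + 3) ∧ u - encodePart d u = 2 := by
    intro u hu
    obtain ⟨huR, hu2⟩ := mem_filter.1 hu
    have : u - encodePart d u ≤ slack d U :=
      single_le_sum (fun _ _ => Nat.zero_le _) _ (mem_map_of_mem _ hu)
    exact (eq_of_sub_encodePart_le_three hd (hR u huR) (by omega)).resolve_left hu2
  have hcard : slack d U = 2 * card U := by
    rw [slack, map_congr rfl fun u hu => (hU u hu).2, map_const', sum_replicate, smul_eq_mul,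
      mul_comm]
  rw [hRU]
  rcases Nat.lt_or_ge (card U) 1 with h | h
  · left
    rw [card_eq_zero.1 (by omega : card U = 0)] at hcard ⊢
    exact ⟨rfl, hcard⟩
  · obtain ⟨u, hu⟩ := card_eq_one.1 (by omega : card U = 1)
    rw [hu] at hcard ⊢
    rcases (hU u (by simp [hu])).1 with rfl | rfl
    · exact Or.inr (Or.inl ⟨rfl, by simpa using hcard⟩)
    · exact Or.inr (Or.inr ⟨rfl, by simpa using hcard⟩)

def encode (d a k : ℕ) (R : Multiset ℕ) : Multiset ℕ :=
  if k = 1 ∧ a + slack d R ≤ 3 then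
    if R.filter (· ≠ d + 2) = 0 then
      if 2 ≤ R.count (d + 2) then
        replicate 2 (d + 4) + replicate (R.count (d + 2) - 2) (d + 2) + replicate (a + d - 4) 1
      else (d + 16) ::ₘ replicate (a + d - 14) 1
    else if R.filter (· ≠ d + 2) = {2 * d + 3} then
      if 1 ≤ R.count (d + 2) then
        replicate 2 (d + 4) + (d + 8) ::ₘ replicate (R.count (d + 2) - 1) (d + 2) +
          replicate (a + d - 11) 1
      else (d + 8) ::ₘ (d + 16) ::ₘ replicate (a + d - 21) 1
    else replicate 2 (d + 4) + replicate (R.count (d + 2)) (d + 2) + replicate (a + 2 * d - 4) 1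
  else
    replicate (a + slack d R + k / 2 * (d - 8) - 4 * (k % 2)) 1 + R.map (encodePart d) +
      replicate (k / 2) (d + 8) + replicate (k % 2) (d + 4)

def decode (d : ℕ) (I : Multiset ℕ) : ℕ × Multiset ℕ :=
  if I.count (d + 4) = 2 then
    if I.count (d + 8) = 1 then (1, replicate (I.count (d + 2) + 1) (d + 2) + {2 * d + 3})
    else if 2 * d - 4 ≤ I.count 1 then (1, replicate (I.count (d + 2)) (d + 2) + {3 * d + 4})
    else (1, replicate (I.count (d + 2) + 2) (d + 2))
  else if I.count (d + 16) = 1 ∧ I.count 1 ≤ d - 11 then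
    if I.count (d + 8) = 1 then (1, {2 * d + 3}) else (1, {d + 2})
  else
    (2 * I.count (d + 8) + I.count (d + 4),
      (I.filter fun y => y ≠ 1 ∧ y ≠ d + 4 ∧ y ≠ d + 8).map (decodePart d))

def Encodes (d a k : ℕ) (R I : Multiset ℕ) : Prop :=
  I.sum = a + k * d + R.sum ∧ decode d I = (k, R)

section
variable {d : ℕ}

theorem decode_replicate_add_replicate_of_lt {m o : ℕ} (ho : o < 2 * d - 4) :
    decode d (replicate 2 (d + 4) + replicate m (d + 2) + replicate o 1) =
      (1, replicate (m + 2) (d + 2)) := by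
  simp [decode, count_replicate]
  omega

theorem decode_replicate_add_replicate_of_le {m o : ℕ} (ho : 2 * d - 4 ≤ o) :
    decode d (replicate 2 (d + 4) + replicate m (d + 2) + replicate o 1) =
      (1, replicate m (d + 2) + {3 * d + 4}) := by
  simp [decode, count_replicate, ho]

theorem decode_replicate_add_cons_replicate {m o : ℕ} :
    decode d (replicate 2 (d + 4) + (d + 8) ::ₘ replicate m (d + 2) + replicate o 1) =
      (1, replicate (m + 1) (d + 2) + {2 * d + 3}) := by
  simp [decode, count_replicate]

theorem decode_cons_replicate {o : ℕ} (ho : o ≤ d - 11) :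
    decode d ((d + 16) ::ₘ replicate o 1) = (1, {d + 2}) := by
  simp [decode, count_replicate, ho]

theorem decode_cons_cons_replicate {o : ℕ} (ho : o ≤ d - 11) :
    decode d ((d + 8) ::ₘ (d + 16) ::ₘ replicate o 1) = (1, {2 * d + 3}) := by
  simp [decode, count_replicate, ho]

end

section
variable {d : ℕ} (hd : 35 ≤ d)
include hd

theorem encodes_encode_replicate {a x : ℕ} (ha : a ≤ 3) (hx : 1 ≤ x) :
    Encodes d a 1 (replicate x (d + 2)) (encode d a 1 (replicate x (d + 2))) := by
  have hfilter : (replicate x (d + 2)).filter (· ≠ d + 2) = 0 :=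
    filter_eq_nil.2 fun y hy h => h (eq_of_mem_replicate hy)
  rw [encode, if_pos ⟨rfl, by simp [slack_replicate_d_add_two hd, ha]⟩, if_pos hfilter,
    count_replicate_self]
  by_cases hx2 : 2 ≤ x
  · rw [if_pos hx2]
    obtain ⟨m, rfl⟩ : ∃ m, x = m + 2 := ⟨x - 2, by omega⟩
    refine ⟨?_, ?_⟩
    · simp only [sum_add, sum_replicate, smul_eq_mul, Nat.add_sub_cancel]
      linarith [add_mul m 2 (d + 2), Nat.sub_add_cancel (by omega : 4 ≤ a + d)]
    · rw [decode_replicate_add_replicate_of_lt (by omega), Nat.add_sub_cancel]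
  · obtain rfl : x = 1 := by omega
    rw [if_neg hx2]
    refine ⟨?_, ?_⟩
    · simp
      omega
    · rw [decode_cons_replicate (by omega), replicate_one]

theorem encodes_encode_replicate_add_three_mul_add_four {a x : ℕ} (ha : a ≤ 1) :
    Encodes d a 1 (replicate x (d + 2) + {3 * d + 4})
      (encode d a 1 (replicate x (d + 2) + {3 * d + 4})) := by
  obtain ⟨hcount, hfilter⟩ :=
    count_filter_replicate_add_of_notMem (a := d + 2) (x := x) (U := {3 * d + 4}) (by simp; omega)
  have hslack : slack d (replicate x (d + 2) + {3 * d + 4}) = 2 := by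
    simp [slack, encodePart_d_add_two hd, encodePart_three_mul_add_four hd]
  rw [encode, hslack, hfilter, hcount, if_pos (by omega : 1 = 1 ∧ a + 2 ≤ 3), if_neg (by simp),
    if_neg (by simp; omega)]
  refine ⟨?_, decode_replicate_add_replicate_of_le (by omega)⟩
  simp only [sum_add, sum_replicate, smul_eq_mul, sum_singleton]
  omega

theorem encodes_encode_replicate_add_two_mul_add_three {a x : ℕ} (ha : a ≤ 1) :
    Encodes d a 1 (replicate x (d + 2) + {2 * d + 3})
      (encode d a 1 (replicate x (d + 2) + {2 * d + 3})) := by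
  obtain ⟨hcount, hfilter⟩ :=
    count_filter_replicate_add_of_notMem (a := d + 2) (x := x) (U := {2 * d + 3}) (by simp; omega)
  have hslack : slack d (replicate x (d + 2) + {2 * d + 3}) = 2 := by
    simp [slack, encodePart_d_add_two hd, encodePart_two_mul_add_three hd]
  rw [encode, hslack, hfilter, hcount, if_pos (by omega : 1 = 1 ∧ a + 2 ≤ 3), if_neg (by simp),
    if_pos rfl]
  by_cases hx : 1 ≤ x
  · rw [if_pos hx]
    obtain ⟨m, rfl⟩ : ∃ m, x = m + 1 := ⟨x - 1, by omega⟩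
    refine ⟨?_, by rw [Nat.add_sub_cancel, decode_replicate_add_cons_replicate]⟩
    simp only [sum_add, sum_cons, sum_replicate, smul_eq_mul, sum_singleton, Nat.add_sub_cancel]
    linarith [add_mul m 1 (d + 2), Nat.sub_add_cancel (by omega : 11 ≤ a + d)]
  · obtain rfl : x = 0 := by omega
    rw [if_neg hx]
    refine ⟨?_, by rw [decode_cons_cons_replicate (by omega)]; simp⟩
    simp
    omega

theorem four_mul_mod_two_le {a k s : ℕ} (h : ¬(k = 1 ∧ a + s ≤ 3)) :
    4 * (k % 2) ≤ a + s + k / 2 * (d - 8) := by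
  rcases Nat.lt_or_ge k 2 with hk | hk
  · interval_cases k <;> omega
  · have : d - 8 ≤ k / 2 * (d - 8) := Nat.le_mul_of_pos_left _ (by omega)
    omega

variable {R : Multiset ℕ} (hR : ∀ v ∈ R, IsLargeQPart d v)
include hR

theorem sum_encode_of_not {a k : ℕ} (h : ¬(k = 1 ∧ a + slack d R ≤ 3)) :
    (encode d a k R).sum = a + k * d + R.sum := by
  have hsum := sum_eq_sum_map_encodePart_add_slack fun v hv => encodePart_le hd (hR v hv)
  have hborrow := four_mul_mod_two_le hd h
  have hk := Nat.div_add_mod k 2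
  rw [encode, if_neg h]
  simp only [sum_add, sum_replicate, smul_eq_mul]
  zify [hborrow, (by omega : 8 ≤ d)] at hk hsum ⊢
  linear_combination (d : ℤ) * hk - hsum

theorem decode_encode_of_not {a k : ℕ} (h : ¬(k = 1 ∧ a + slack d R ≤ 3)) :
    decode d (encode d a k R) = (k, R) := by
  set W := R.map (encodePart d)
  have hW : ∀ y ∈ W, y ≠ 1 ∧ y ≠ d + 4 ∧ y ≠ d + 8 := by
    simp only [W, mem_map, forall_exists_index, and_imp, forall_apply_eq_imp_iff₂]
    exact fun v hv => encodePart_ne hd (hR v hv)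
  rw [encode, if_neg h]
  set I := replicate (a + slack d R + k / 2 * (d - 8) - 4 * (k % 2)) 1 + W +
    replicate (k / 2) (d + 8) + replicate (k % 2) (d + 4)
  have hI1 : I.count 1 = a + slack d R + k / 2 * (d - 8) - 4 * (k % 2) := by
    simp [I, count_replicate, count_eq_zero.2 fun h => (hW 1 h).1 rfl]
  have hI4 : I.count (d + 4) = k % 2 := by
    simp [I, count_replicate, count_eq_zero.2 fun h => (hW _ h).2.1 rfl]
  have hI8 : I.count (d + 8) = k / 2 := by
    simp [I, count_replicate, count_eq_zero.2 fun h => (hW _ h).2.2 rfl]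
  have hlone : ¬(I.count (d + 16) = 1 ∧ I.count 1 ≤ d - 11) := by
    rintro ⟨h16, hsmall⟩
    obtain ⟨v, hv, hv16⟩ : ∃ v ∈ R, encodePart d v = d + 16 := by
      have : 0 < W.count (d + 16) := by
        simp only [I, count_add, count_replicate] at h16
        split_ifs at h16 <;> omega
      exact mem_map.1 (count_pos.1 this)
    have : v - encodePart d v ≤ slack d R :=
      single_le_sum (fun _ _ => Nat.zero_le _) _ (mem_map_of_mem _ hv)
    have := le_sub_encodePart_of_eq hd (hR v hv) hv16
    omega
  have hfilter : I.filter (fun y => y ≠ 1 ∧ y ≠ d + 4 ∧ y ≠ d + 8) = W := by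
    have hnil : ∀ c n, (c = 1 ∨ c = d + 4 ∨ c = d + 8) →
        (replicate n c).filter (fun y => y ≠ 1 ∧ y ≠ d + 4 ∧ y ≠ d + 8) = 0 := fun c n hc =>
      filter_eq_nil.2 fun y hy => by rw [eq_of_mem_replicate hy]; tauto
    rw [filter_add, filter_add, filter_add, hnil _ _ (by tauto), hnil _ _ (by tauto),
      hnil _ _ (by tauto), filter_eq_self.2 hW, zero_add, add_zero, add_zero]
  rw [decode, if_neg (by omega), if_neg hlone, hI4, hI8, hfilter, map_map]
  refine Prod.ext (by omega) ?_
  conv_rhs => rw [← map_id R]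
  exact map_congr rfl fun v hv => decodePart_encodePart hd (hR v hv)

theorem encodes_encode {a k : ℕ} (hexc : ¬(k = 1 ∧ R = 0 ∧ a ≤ 3)) :
    Encodes d a k R (encode d a k R) := by
  by_cases h : k = 1 ∧ a + slack d R ≤ 3
  · obtain ⟨rfl, ha⟩ := h
    have hR' := replicate_count_add_filter_ne (d + 2) R
    rcases filter_ne_d_add_two_of_slack_le_three hd hR (by omega) with
      ⟨hU, -⟩ | ⟨hU, hs⟩ | ⟨hU, hs⟩ <;> rw [hU] at hR' <;> rw [← hR']
    · rw [add_zero] at hR' ⊢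
      refine encodes_encode_replicate hd (by omega) (Nat.pos_of_ne_zero fun hx => hexc ?_)
      rw [← hR', hx, replicate_zero]
      exact ⟨rfl, rfl, by omega⟩
    · exact encodes_encode_replicate_add_three_mul_add_four hd (by omega)
    · exact encodes_encode_replicate_add_two_mul_add_three hd (by omega)
  · exact ⟨sum_encode_of_not hd hR h, decode_encode_of_not hd hR h⟩

theorem mem_encode {a k y : ℕ} (hy : y ∈ encode d a k R) :
    y % (2 * d) = 1 ∨ ∃ j, 1 ≤ j ∧ j ≤ 5 ∧ y % (2 * d) = d + 2 ^ j := by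
  have hy' : y = 1 ∨ y = d + 2 ∨ y = d + 4 ∨ y = d + 8 ∨ y = d + 16 ∨
      ∃ v ∈ R, encodePart d v = y := by
    unfold encode at hy
    split_ifs at hy <;> simp only [mem_add, mem_cons, mem_replicate, mem_map] at hy <;> tauto
  rcases hy' with rfl | rfl | rfl | rfl | rfl | ⟨v, hv, rfl⟩
  · exact Or.inl (Nat.mod_eq_of_lt (by omega))
  · exact Or.inr ⟨1, le_rfl, by norm_num, Nat.mod_eq_of_lt (by omega)⟩
  · exact Or.inr ⟨2, by norm_num, by norm_num, Nat.mod_eq_of_lt (by omega)⟩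
  · exact Or.inr ⟨3, by norm_num, by norm_num, Nat.mod_eq_of_lt (by omega)⟩
  · exact Or.inr ⟨4, by norm_num, by norm_num, Nat.mod_eq_of_lt (by omega)⟩
  · rcases encodePart_mod hd (hR v hv) with h | h | h | h
    · exact Or.inl h
    · exact Or.inr ⟨1, le_rfl, by norm_num, h⟩
    · exact Or.inr ⟨4, by norm_num, by norm_num, h⟩
    · exact Or.inr ⟨5, by norm_num, le_rfl, h⟩

end

def rest (d : ℕ) (s : Multiset ℕ) : Multiset ℕ := s.filter fun v => v ≠ 1 ∧ v ≠ d

def encodeParts (d : ℕ) (s : Multiset ℕ) : Multiset ℕ :=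
  encode d (s.count 1) (s.count d) (rest d s)

theorem sum_eq_count_one_add_count_mul_add_sum_rest {d : ℕ} (hd : d ≠ 1) (s : Multiset ℕ) :
    s.sum = s.count 1 + s.count d * d + (rest d s).sum := by
  conv_lhs => rw [eq_replicate_add_replicate_add_filter (Ne.symm hd) s]
  simp [sum_add, sum_replicate, rest]

theorem isLargeQPart_of_mem_rest {d : ℕ} {s : Multiset ℕ} (hs : ∀ v ∈ s, IsQPart d v) :
    ∀ v ∈ rest d s, IsLargeQPart d v := fun v hv =>
  have hv := mem_filter.1 hv
  ⟨hs v hv.1, hv.2⟩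

section
variable {d : ℕ} (hd : 35 ≤ d)
include hd

theorem encodes_encodeParts {s : Multiset ℕ} (hs : ∀ v ∈ s, IsQPart d v)
    (hn : ∀ b ≤ 3, s.sum ≠ d + b) :
    Encodes d (s.count 1) (s.count d) (rest d s) (encodeParts d s) := by
  refine encodes_encode hd (isLargeQPart_of_mem_rest hs) ?_
  rintro ⟨hk, hR, ha⟩
  have hsum := sum_eq_count_one_add_count_mul_add_sum_rest (by omega : d ≠ 1) s
  rw [hk, hR, sum_zero] at hsum
  exact hn (s.count 1) ha (by omega)

theorem sum_encodeParts {s : Multiset ℕ} (hs : ∀ v ∈ s, IsQPart d v)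
    (hn : ∀ b ≤ 3, s.sum ≠ d + b) : (encodeParts d s).sum = s.sum := by
  rw [(encodes_encodeParts hd hs hn).1,
    sum_eq_count_one_add_count_mul_add_sum_rest (by omega : d ≠ 1) s]

theorem eq_of_encodeParts_eq {s t : Multiset ℕ} (hs : ∀ v ∈ s, IsQPart d v)
    (ht : ∀ v ∈ t, IsQPart d v) (hn : ∀ b ≤ 3, s.sum ≠ d + b) (hst : s.sum = t.sum)
    (h : encodeParts d s = encodeParts d t) : s = t := by
  have hdec := (encodes_encodeParts hd hs hn).2.symm.trans
    (h ▸ (encodes_encodeParts hd ht (hst ▸ hn)).2)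
  obtain ⟨hk, hR⟩ := Prod.ext_iff.1 hdec
  simp only at hk hR
  have h1 : s.count 1 = t.count 1 := by
    have := sum_eq_count_one_add_count_mul_add_sum_rest (by omega : d ≠ 1) s
    have := sum_eq_count_one_add_count_mul_add_sum_rest (by omega : d ≠ 1) t
    rw [hk, hR] at *
    omega
  rw [eq_replicate_add_replicate_add_filter (by omega : 1 ≠ d) s,
    eq_replicate_add_replicate_add_filter (by omega : 1 ≠ d) t]
  exact congrArg₂ _ (by rw [h1, hk]) hR

theorem QNum_le_LNum_six {n : ℕ} (hn : ∀ b ≤ 3, n ≠ d + b) : QNum 1 (d - 2) n ≤ LNum d 6 n := by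
  have hQ : ∀ x, (x % (d - 2 + 3) = 1 % (d - 2 + 3) ∨ (x + 1) % (d - 2 + 3) = 0) ↔
      IsQPart d x := by
    intro x
    rw [show d - 2 + 3 = d + 1 by omega, Nat.mod_eq_of_lt (by omega : 1 < d + 1)]
    rfl
  simp only [QNum, LNum, hQ]
  have hL : ∀ p : {p : n.Partition // ∀ x ∈ p.parts, IsQPart d x}, ∀ y ∈ encodeParts d p.1.parts,
      y % (2 * d) = 1 ∨ ∃ j, 1 ≤ j ∧ j ≤ 6 - 1 ∧ y % (2 * d) = d + 2 ^ j := fun p _ hy =>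
    mem_encode hd (isLargeQPart_of_mem_rest p.2) hy
  have hn' : ∀ p : n.Partition, ∀ b ≤ 3, p.parts.sum ≠ d + b := fun p => by
    rw [p.parts_sum]; exact hn
  refine Nat.card_le_card_of_injective (fun p => ⟨⟨encodeParts d p.1.parts, fun hy => ?_,
    (sum_encodeParts hd p.2 (hn' p.1)).trans p.1.parts_sum⟩, hL p⟩) fun p q hpq => ?_
  · refine Nat.pos_of_ne_zero fun h0 => ?_
    rcases hL p _ hy with h | ⟨j, -, -, h⟩ <;> rw [h0, Nat.zero_mod] at h
    · omega
    · exact absurd h (by positivity)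
  · exact Subtype.ext (Nat.Partition.ext (eq_of_encodeParts_eq hd p.2 q.2 (hn' p.1)
      (by rw [p.1.parts_sum, q.1.parts_sum]) (congrArg (fun p => p.1.parts) hpq)))

end

theorem LNum_mono (d n : ℕ) {r r' : ℕ} (h : r ≤ r') : LNum d r n ≤ LNum d r' n :=
  Nat.card_le_card_of_injective
    (fun p => ⟨p.1, fun x hx => (p.2 x hx).imp_right fun ⟨j, h1, hj, hx⟩ => ⟨j, h1, by omega, hx⟩⟩)
    fun _ _ hpq => Subtype.ext (Subtype.mk.inj hpq)

end PartitionInjection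

open PartitionInjection in
theorem L_dominates_Q_general (r d n : ℕ) (hr : 6 ≤ r) (hd : d = 2 ^ r - 1)
    (h1 : n ≠ d) (h2 : n ≠ d + 1) (h3 : n ≠ d + 2) (h4 : n ≠ d + 3) :
    QNum 1 (d - 2) n ≤ LNum d r n := by
  have hd35 : 35 ≤ d := by
    have : 2 ^ 6 ≤ 2 ^ r := Nat.pow_le_pow_right (by norm_num) hr
    omega
  calc QNum 1 (d - 2) n ≤ LNum d 6 n :=
        QNum_le_LNum_six hd35 fun b hb => by interval_cases b <;> assumption
    _ ≤ LNum d r n := LNum_mono d n hr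

theorem L_dominates_Q (r d n : ℕ) (hr : 6 ≤ r) (hd : d = 2 ^ r - 1) (hn : 0 < n)
    (h1 : n ≠ d) (h2 : n ≠ d + 1) (h3 : n ≠ d + 2) (h4 : n ≠ d + 3) :
    QNum 1 (d - 2) n ≤ LNum d r n :=
  L_dominates_Q_general r d n hr hd h1 h2 h3 h4
end

section
/- Let d > 127 with d not of the form 2^r − 1 for any integer r, and set r = ⌊log₂(d+1)⌋. Then for all integers n ≥ 4d + 2^r, g_d(n) ≥ Q_{d−2}^{(1)}(n). -/
/-- `gNum d n`: with `r = ⌊log₂ (d+1)⌋`, the number of partitions of `n` into parts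
congruent to one of `1, d+2, d+4, d+8, …, d+2^(r-2)` modulo `2d`, in which additionally
parts congruent to `d + 2^(r-1)` modulo `2d` may appear, each such part at most once. -/
noncomputable def gNum (d n : ℕ) : ℕ :=
  Nat.card {p : n.Partition //
    (∀ x ∈ p.parts, x % (2 * d) = 1 ∨
      (∃ j, 1 ≤ j ∧ j ≤ Nat.log 2 (d + 1) - 2 ∧ x % (2 * d) = d + 2 ^ j) ∨
      x % (2 * d) = d + 2 ^ (Nat.log 2 (d + 1) - 1)) ∧
    ∀ x ∈ p.parts, x % (2 * d) = d + 2 ^ (Nat.log 2 (d + 1) - 1) → p.parts.count x ≤ 1}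

/-!
An explicit injection from the partitions counted by `Q` into those counted by `g`. Every part
`x ≡ ±1 (mod d+1)` other than `1` and `d` is replaced by a part `≤ x` in one of the classes `1, d+2, d+4, d+8 (mod 2d)` from which `x` can be recovered. The
parts equal to `d` are recorded by parts of the classes `d+16, d+32`, available since `r ≥ 7`;
a lone `d` does not fit and is marked instead by a part of the class `d + 2^(r-1)`, whose
extra size is paid for by re-encoding one other part more tightly, or, if there is none, by
the padding (this is where `n ≥ 4d + 2^r` enters). The image is padded with `1`s up to `n`,
and the residues modulo `2d` tell the encoded pieces apart, which gives a left inverse.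
-/

open Multiset

namespace GDominatesQ

lemma odd_mul_add_mod_two_mul {d c : ℕ} (i : ℕ) (hc : c < d) :
    ((2 * i + 1) * d + c) % (2 * d) = d + c := by
  rw [show (2 * i + 1) * d + c = d + c + 2 * d * i by ring, Nat.add_mul_mod_self_left,
    Nat.mod_eq_of_lt (by omega)]

lemma even_mul_add_mod_two_mul {d c : ℕ} (i : ℕ) (hc : c < 2 * d) :
    (2 * i * d + c) % (2 * d) = c := by
  rw [show 2 * i * d = i * (2 * d) by ring, Nat.mul_add_mod_of_lt hc]

lemma mul_add_div_of_lt {d c : ℕ} (j : ℕ) (hc : c < d) : (j * d + c) / d = j := by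
  rw [mul_comm, Nat.mul_add_div (by omega), Nat.div_eq_of_lt hc, add_zero]

/-- A part `≡ ±1 (mod d+1)` of a `Q`-partition other than `1` and `d`. -/
def LargePart (d x : ℕ) : Prop :=
  ∃ q, 1 ≤ q ∧ (x = q * (d + 1) + 1 ∨ x = q * (d + 1) + d)

def shrunkResidues (d : ℕ) : Finset ℕ := {1, d + 2, d + 4, d + 8}

/-- A part `j * d + c` with `c < d` has residue `c` or `d + c` modulo `2 * d` according to the
parity of `j`; the branches are `x = q (d + 1) + 1` and `x = q (d + 1) + d` for odd and even
`q`. -/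
def shrink (d x : ℕ) : ℕ :=
  if x % (d + 1) = 1 then
    if x / (d + 1) % 2 = 1 then x / (d + 1) * d + 2 else (x / (d + 1) - 1) * d + 8
  else
    if x / (d + 1) % 2 = 1 then (x / (d + 1) + 1) * d + 1 else (x / (d + 1) - 1) * d + 4

def unshrink (d y : ℕ) : ℕ :=
  if y % (2 * d) = 1 then y / d * (d + 1) - 1
  else if y % (2 * d) = d + 2 then y / d * (d + 1) + 1
  else if y % (2 * d) = d + 4 then (y / d + 1) * (d + 1) + d
  else (y / d + 1) * (d + 1) + 1

lemma shrink_mul_add_one {d : ℕ} (hd : 1 < d) (q : ℕ) :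
    shrink d (q * (d + 1) + 1) = if q % 2 = 1 then q * d + 2 else (q - 1) * d + 8 := by
  simp [shrink, Nat.mul_add_mod_of_lt (show 1 < d + 1 by omega),
    mul_add_div_of_lt q (show 1 < d + 1 by omega)]

lemma shrink_mul_add_self {d : ℕ} (hd : 1 < d) (q : ℕ) :
    shrink d (q * (d + 1) + d) = if q % 2 = 1 then (q + 1) * d + 1 else (q - 1) * d + 4 := by
  simp [shrink, Nat.mul_add_mod_of_lt (show d < d + 1 by omega),
    mul_add_div_of_lt q (show d < d + 1 by omega), show d ≠ 1 by omega]

lemma shrink_spec {d x : ℕ} (hd : 8 < d) (hx : LargePart d x) :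
    1 < shrink d x ∧ shrink d x ≤ x ∧ shrink d x % (2 * d) ∈ shrunkResidues d ∧
      unshrink d (shrink d x) = x := by
  obtain ⟨q, hq, rfl | rfl⟩ := hx <;>
    obtain ⟨i, rfl | rfl⟩ : ∃ i, q = 2 * i + 1 ∨ q = 2 * i + 2 := ⟨(q - 1) / 2, by omega⟩
  · have hy : shrink d ((2 * i + 1) * (d + 1) + 1) = (2 * i + 1) * d + 2 := by
      rw [shrink_mul_add_one (by omega), if_pos (by omega)]
    have hres := odd_mul_add_mod_two_mul i (show 2 < d by omega)
    rw [hy]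
    refine ⟨by nlinarith, by nlinarith, by simp [hres, shrunkResidues], ?_⟩
    simp [unshrink, hres, mul_add_div_of_lt _ (show 2 < d by omega)]
  · have hy : shrink d ((2 * i + 2) * (d + 1) + 1) = (2 * i + 1) * d + 8 := by
      rw [shrink_mul_add_one (by omega), if_neg (by omega)]; rfl
    have hres := odd_mul_add_mod_two_mul i (show 8 < d by omega)
    rw [hy]
    refine ⟨by nlinarith, by nlinarith, by simp [hres, shrunkResidues], ?_⟩
    simp [unshrink, hres, mul_add_div_of_lt _ (show 8 < d by omega)]
  · have hy : shrink d ((2 * i + 1) * (d + 1) + d) = 2 * (i + 1) * d + 1 := by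
      rw [shrink_mul_add_self (by omega), if_pos (by omega)]; ring
    have hres := even_mul_add_mod_two_mul (i + 1) (show 1 < 2 * d by omega)
    rw [hy]
    refine ⟨by nlinarith, by nlinarith, by simp [hres, shrunkResidues], ?_⟩
    simp [unshrink, hres, mul_add_div_of_lt _ (show 1 < d by omega)]
    ring_nf; omega
  · have hy : shrink d ((2 * i + 2) * (d + 1) + d) = (2 * i + 1) * d + 4 := by
      rw [shrink_mul_add_self (by omega), if_neg (by omega)]; rfl
    have hres := odd_mul_add_mod_two_mul i (show 4 < d by omega)
    rw [hy]
    refine ⟨by nlinarith, by nlinarith, by simp [hres, shrunkResidues], ?_⟩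
    simp [unshrink, hres, mul_add_div_of_lt _ (show 4 < d by omega)]

def oddSplit (w : ℕ) : Multiset ℕ :=
  if w % 2 = 1 then {w} else if w = 0 then 0 else {w - 1, 1}

lemma sum_oddSplit (w : ℕ) : (oddSplit w).sum = w := by
  unfold oddSplit; split_ifs <;> simp <;> omega

lemma card_oddSplit_le (w : ℕ) : card (oddSplit w) ≤ 2 := by
  unfold oddSplit; split_ifs <;> simp

lemma odd_of_mem_oddSplit {w j : ℕ} (hj : j ∈ oddSplit w) : j % 2 = 1 := by
  unfold oddSplit at hj; split_ifs at hj <;> simp at hj <;> omega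

lemma oddSplit_eq_zero_iff {w : ℕ} : oddSplit w = 0 ↔ w = 0 := by
  unfold oddSplit; split_ifs <;> simp <;> omega

/-- Odd multipliers make all parts congruent to `d + c` modulo `2 * d`, and `w` is the sum of
their quotients by `d`. -/
def codeBlock (d c w : ℕ) : Multiset ℕ := (oddSplit w).map (fun j => j * d + c)

lemma mod_of_mem_codeBlock {d c w y : ℕ} (hc : c < d) (hy : y ∈ codeBlock d c w) :
    y % (2 * d) = d + c := by
  obtain ⟨j, hj, rfl⟩ := mem_map.mp hy
  obtain ⟨i, rfl⟩ : ∃ i, j = 2 * i + 1 := ⟨j / 2, by have := odd_of_mem_oddSplit hj; omega⟩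
  exact odd_mul_add_mod_two_mul i hc

lemma sum_map_div_codeBlock {d c : ℕ} (hc : c < d) (w : ℕ) :
    ((codeBlock d c w).map (· / d)).sum = w := by
  simp [codeBlock, mul_add_div_of_lt _ hc, sum_oddSplit]

lemma sum_codeBlock_le (d c w : ℕ) : (codeBlock d c w).sum ≤ w * d + 2 * c := by
  simp only [codeBlock, sum_map_add, sum_map_mul_right, map_id', sum_oddSplit, map_const',
    sum_replicate, smul_eq_mul]
  have := card_oddSplit_le w
  nlinarith

lemma codeBlock_eq_zero_iff {d c w : ℕ} : codeBlock d c w = 0 ↔ w = 0 := by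
  simp [codeBlock, oddSplit_eq_zero_iff]

def codeResidues (d : ℕ) : Finset ℕ := {d + 16, d + 32}

/-- The class of `x` modulo `d + 1` is recorded by the residue (`d + 32` or `d + 16`) of the
parts, and `x / (d + 1)` (less one in the first case, to save room) by the sum of their
quotients by `d`. -/
def largeCode (d x : ℕ) : Multiset ℕ :=
  if x % (d + 1) = 1 then codeBlock d 32 (x / (d + 1) - 1) else codeBlock d 16 (x / (d + 1))

def largeDecode (d : ℕ) (E : Multiset ℕ) : ℕ :=
  if d + 16 ∈ E.map (· % (2 * d)) then (E.map (· / d)).sum * (d + 1) + d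
  else ((E.map (· / d)).sum + 1) * (d + 1) + 1

lemma mod_mem_codeResidues_of_mem_largeCode {d x y : ℕ} (hd : 32 < d)
    (hy : y ∈ largeCode d x) : y % (2 * d) ∈ codeResidues d := by
  unfold largeCode at hy
  split_ifs at hy <;> simp [codeResidues, mod_of_mem_codeBlock (by omega) hy]

lemma largeCode_spec {d x : ℕ} (hd : 32 < d) (hx : LargePart d x) :
    (largeCode d x).sum + d ≤ x + 64 ∧ largeDecode d (largeCode d x) = x := by
  obtain ⟨q, hq, rfl | rfl⟩ := hx
  · obtain ⟨p, rfl⟩ : ∃ p, q = p + 1 := ⟨q - 1, by omega⟩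
    have hcode : largeCode d ((p + 1) * (d + 1) + 1) = codeBlock d 32 p := by
      simp [largeCode, Nat.mul_add_mod_of_lt (show 1 < d + 1 by omega),
        mul_add_div_of_lt (p + 1) (show 1 < d + 1 by omega)]
    have hres : ∀ y ∈ codeBlock d 32 p, y % (2 * d) = d + 32 :=
      fun y hy => mod_of_mem_codeBlock hd hy
    rw [hcode]
    refine ⟨?_, ?_⟩
    · have := sum_codeBlock_le d 32 p
      nlinarith
    · have hno : d + 16 ∉ (codeBlock d 32 p).map (· % (2 * d)) := by
        simp only [mem_map, not_exists, not_and]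
        intro y hy; rw [hres y hy]; omega
      rw [largeDecode, if_neg hno, sum_map_div_codeBlock hd]
  · have hcode : largeCode d (q * (d + 1) + d) = codeBlock d 16 q := by
      simp [largeCode, Nat.mul_add_mod_of_lt (show d < d + 1 by omega),
        mul_add_div_of_lt q (show d < d + 1 by omega), show d ≠ 1 by omega]
    have hres : ∀ y ∈ codeBlock d 16 q, y % (2 * d) = d + 16 :=
      fun y hy => mod_of_mem_codeBlock (by omega) hy
    rw [hcode]
    refine ⟨?_, ?_⟩
    · have := sum_codeBlock_le d 16 q
      nlinarith
    · have hne : codeBlock d 16 q ≠ 0 := mt codeBlock_eq_zero_iff.mp (by omega)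
      obtain ⟨y, hy⟩ := exists_mem_of_ne_zero hne
      rw [largeDecode, if_pos (mem_map.mpr ⟨y, hy, hres y hy⟩), sum_map_div_codeBlock (by omega)]

def flag (d : ℕ) : ℕ := d + 2 ^ (Nat.log 2 (d + 1) - 1)

lemma seven_le_log {d : ℕ} (hd : 127 < d) : 7 ≤ Nat.log 2 (d + 1) :=
  Nat.le_log_of_pow_le (by norm_num) (by omega)

lemma flag_bounds {d : ℕ} (hd : 127 < d) :
    d + 64 ≤ flag d ∧ flag d + 64 ≤ 2 * d ∧
      flag d + (flag d + 2 * d) = 4 * d + 2 ^ Nat.log 2 (d + 1) := by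
  have h7 := seven_le_log hd
  have hpow : 2 ^ Nat.log 2 (d + 1) = 2 * 2 ^ (Nat.log 2 (d + 1) - 1) := by
    rw [← pow_succ', Nat.sub_add_cancel (by omega)]
  have hle := Nat.pow_log_le_self 2 (show d + 1 ≠ 0 by omega)
  have h64 : 2 ^ 6 ≤ 2 ^ (Nat.log 2 (d + 1) - 1) := Nat.pow_le_pow_right (by norm_num) (by omega)
  unfold flag
  omega

lemma flag_mod {d : ℕ} (hd : 127 < d) : flag d % (2 * d) = flag d :=
  Nat.mod_eq_of_lt (by have := flag_bounds hd; omega)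

lemma flag_add_two_mul_mod {d : ℕ} (hd : 127 < d) : (flag d + 2 * d) % (2 * d) = flag d := by
  rw [Nat.add_mod_right, flag_mod hd]

def largeParts (d : ℕ) (M : Multiset ℕ) : Multiset ℕ := M.filter (fun x => x ≠ 1 ∧ x ≠ d)

lemma filter_ne_one_eq {d : ℕ} (hd : d ≠ 1) (M : Multiset ℕ) :
    M.filter (· ≠ 1) = replicate (M.count d) d + largeParts d M := by
  rw [← filter_add_not (· = d) (M.filter (· ≠ 1)), filter_filter, filter_filter, largeParts,
    ← filter_eq']
  congr 1
  · exact filter_congr fun x _ => ⟨And.left, fun h => ⟨h, h ▸ hd⟩⟩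
  · exact filter_congr fun x _ => by tauto

noncomputable def chosenLarge {M : Multiset ℕ} (h : M ≠ 0) : ℕ := (exists_mem_of_ne_zero h).choose

lemma chosenLarge_mem {M : Multiset ℕ} (h : M ≠ 0) : chosenLarge h ∈ M :=
  (exists_mem_of_ne_zero h).choose_spec

noncomputable def kept (d : ℕ) (M : Multiset ℕ) : Multiset ℕ :=
  if M.count d = 1 then
    if h : largeParts d M = 0 then 0 else (largeParts d M).erase (chosenLarge h)
  else largeParts d M

noncomputable def tag (d : ℕ) (M : Multiset ℕ) : Multiset ℕ :=
  if M.count d = 1 then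
    if h : largeParts d M = 0 then {flag d, flag d + 2 * d}
    else flag d ::ₘ largeCode d (chosenLarge h)
  else codeBlock d 32 (M.count d - 1)

def tagDecode (d : ℕ) (T : Multiset ℕ) : Multiset ℕ :=
  let E := T.filter (· % (2 * d) ∈ codeResidues d)
  let flags := card (T.filter (· % (2 * d) = flag d))
  if flags = 0 then replicate (if E = 0 then 0 else (E.map (· / d)).sum + 1) d
  else if flags = 1 then {d, largeDecode d E}
  else {d}

lemma kept_le_largeParts (d : ℕ) (M : Multiset ℕ) : kept d M ≤ largeParts d M := by
  unfold kept; split_ifs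
  exacts [zero_le _, erase_le _ _, le_rfl]

lemma largePart_of_mem_kept {d x : ℕ} {M : Multiset ℕ}
    (hM : ∀ x ∈ largeParts d M, LargePart d x) (hx : x ∈ kept d M) : LargePart d x :=
  hM x (mem_of_le (kept_le_largeParts d M) hx)

lemma mod_of_mem_tag {d y : ℕ} (hd : 127 < d) {M : Multiset ℕ} (hy : y ∈ tag d M) :
    y % (2 * d) ∈ codeResidues d ∨ y % (2 * d) = flag d := by
  unfold tag at hy
  split_ifs at hy
  · simp only [insert_eq_cons, mem_cons, mem_singleton] at hy
    rcases hy with rfl | rfl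
    exacts [.inr (flag_mod hd), .inr (flag_add_two_mul_mod hd)]
  · rcases mem_cons.mp hy with rfl | hy
    · exact .inr (flag_mod hd)
    · exact .inl (mod_mem_codeResidues_of_mem_largeCode (by omega) hy)
  · exact .inl (by simp [codeResidues, mod_of_mem_codeBlock (by omega) hy])

lemma mod_not_mem_codeResidues_of_mod_eq_flag {d y : ℕ} (hd : 127 < d)
    (hy : y % (2 * d) = flag d) : y % (2 * d) ∉ codeResidues d := by
  have := flag_bounds hd
  simp only [hy, codeResidues, Finset.mem_insert, Finset.mem_singleton]
  omega

lemma filter_mod_eq_flag_eq_zero {d : ℕ} (hd : 127 < d) {s : Multiset ℕ}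
    (hs : ∀ y ∈ s, y % (2 * d) ∈ codeResidues d) : s.filter (· % (2 * d) = flag d) = 0 :=
  filter_eq_nil.mpr fun y hy hy' => mod_not_mem_codeResidues_of_mod_eq_flag hd hy' (hs y hy)

lemma codeBlock_mod_mem_codeResidues {d y : ℕ} (hd : 32 < d) (w : ℕ)
    (hy : y ∈ codeBlock d 32 w) : y % (2 * d) ∈ codeResidues d := by
  simp [codeResidues, mod_of_mem_codeBlock hd hy]

lemma tagDecode_tag_add_kept {d : ℕ} (hd : 127 < d) {M : Multiset ℕ}
    (hM : ∀ x ∈ largeParts d M, LargePart d x) :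
    tagDecode d (tag d M) + kept d M = M.filter (· ≠ 1) := by
  have hflag0 := flag_mod hd
  have hflag1 := flag_add_two_mul_mod hd
  rw [filter_ne_one_eq (d := d) (by omega)]
  unfold tag kept
  split_ifs with h1 h0
  · simp [tagDecode, hflag0, hflag1, h1, h0]
  · set a := chosenLarge h0
    have hcode : ∀ y ∈ largeCode d a, y % (2 * d) ∈ codeResidues d :=
      fun y hy => mod_mem_codeResidues_of_mem_largeCode (by omega) hy
    simp only [tagDecode, filter_cons, if_pos hflag0,
      if_neg (mod_not_mem_codeResidues_of_mod_eq_flag hd hflag0),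
      filter_mod_eq_flag_eq_zero hd hcode, filter_eq_self.mpr hcode, zero_add, add_zero,
      card_singleton, if_neg one_ne_zero, if_true]
    rw [(largeCode_spec (by omega) (hM a (chosenLarge_mem h0))).2, h1]
    conv_rhs => rw [← cons_erase (chosenLarge_mem h0)]
    simpa using cons_swap _ _ _
  · have hcode : ∀ y ∈ codeBlock d 32 (M.count d - 1), y % (2 * d) ∈ codeResidues d :=
      fun y hy => codeBlock_mod_mem_codeResidues (by omega) _ hy
    simp only [tagDecode, filter_mod_eq_flag_eq_zero hd hcode, filter_eq_self.mpr hcode,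
      card_zero, if_true, codeBlock_eq_zero_iff, sum_map_div_codeBlock (show 32 < d by omega)]
    congr
    split_ifs <;> omega

lemma count_tag_le_one {d y : ℕ} (hd : 127 < d) (M : Multiset ℕ) (hy : y % (2 * d) = flag d) :
    (tag d M).count y ≤ 1 := by
  have hcode := mod_not_mem_codeResidues_of_mod_eq_flag hd hy
  unfold tag
  split_ifs with h1 h0
  · simp only [insert_eq_cons, count_cons, count_singleton]
    split_ifs <;> omega
  · rw [count_cons, count_eq_zero.mpr fun h => hcode (mod_mem_codeResidues_of_mem_largeCode
      (by omega) h)]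
    split_ifs <;> omega
  · rw [count_eq_zero.mpr fun h => hcode (codeBlock_mod_mem_codeResidues (by omega) _ h)]
    omega

lemma sum_tag_add_sum_kept_le {d : ℕ} (hd : 127 < d) {M : Multiset ℕ}
    (hM : ∀ x ∈ largeParts d M, LargePart d x) :
    (tag d M).sum + (kept d M).sum ≤
      max (M.filter (· ≠ 1)).sum (4 * d + 2 ^ Nat.log 2 (d + 1)) := by
  have hflag := flag_bounds hd
  rw [filter_ne_one_eq (d := d) (by omega), sum_add, sum_replicate, smul_eq_mul]
  unfold tag kept
  split_ifs with h1 h0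
  · simp [hflag.2.2]
  · have hcode := (largeCode_spec (by omega) (hM _ (chosenLarge_mem h0))).1
    have hsum := sum_erase (chosenLarge_mem h0)
    simp only [sum_cons, h1]
    omega
  · rcases Nat.eq_zero_or_pos (M.count d) with h | h
    · simp [h, codeBlock_eq_zero_iff.mpr rfl]
    · obtain ⟨m, hm⟩ : ∃ m, M.count d = m + 2 := ⟨M.count d - 2, by omega⟩
      have := sum_codeBlock_le d 32 (m + 1)
      rw [hm, show m + 2 - 1 = m + 1 by omega]
      apply le_max_of_le_left
      nlinarith

noncomputable def core (d : ℕ) (M : Multiset ℕ) : Multiset ℕ :=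
  (kept d M).map (shrink d) + tag d M

lemma sum_core_le {d : ℕ} (hd : 127 < d) {M : Multiset ℕ}
    (hM : ∀ x ∈ largeParts d M, LargePart d x) :
    (core d M).sum ≤ max (M.filter (· ≠ 1)).sum (4 * d + 2 ^ Nat.log 2 (d + 1)) := by
  have hshrink : ((kept d M).map (shrink d)).sum ≤ (kept d M).sum := by
    simpa using sum_map_le_sum_map (shrink d) id fun x hx =>
      (shrink_spec (by omega) (largePart_of_mem_kept hM hx)).2.1
  have := sum_tag_add_sum_kept_le hd hM
  rw [core, sum_add]
  omega

def GResidue (d y : ℕ) : Prop :=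
  y % (2 * d) = 1 ∨ (∃ j, 1 ≤ j ∧ j ≤ Nat.log 2 (d + 1) - 2 ∧ y % (2 * d) = d + 2 ^ j) ∨
    y % (2 * d) = flag d

lemma gResidue_of_mem_core {d y : ℕ} (hd : 127 < d) {M : Multiset ℕ}
    (hM : ∀ x ∈ largeParts d M, LargePart d x) (hy : y ∈ core d M) : GResidue d y := by
  have h7 := seven_le_log hd
  have hpow : ∀ j, 1 ≤ j → j ≤ 5 → y % (2 * d) = d + 2 ^ j → GResidue d y :=
    fun j hj hj' h => .inr (.inl ⟨j, hj, by omega, h⟩)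
  rcases mem_add.mp hy with hy | hy
  · obtain ⟨x, hx, rfl⟩ := mem_map.mp hy
    have := (shrink_spec (by omega) (largePart_of_mem_kept hM hx)).2.2.1
    simp only [shrunkResidues, Finset.mem_insert, Finset.mem_singleton] at this
    rcases this with h | h | h | h
    exacts [.inl h, hpow 1 le_rfl (by norm_num) h, hpow 2 (by norm_num) (by norm_num) h,
      hpow 3 (by norm_num) (by norm_num) h]
  · rcases mod_of_mem_tag hd hy with h | h
    · simp only [codeResidues, Finset.mem_insert, Finset.mem_singleton] at h
      rcases h with h | h
      exacts [hpow 4 (by norm_num) (by norm_num) h, hpow 5 (by norm_num) (by norm_num) h]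
    · exact .inr (.inr h)

lemma le_mod_of_mem_tag {d y : ℕ} (hd : 127 < d) {M : Multiset ℕ} (hy : y ∈ tag d M) :
    d + 16 ≤ y % (2 * d) := by
  have := flag_bounds hd
  rcases mod_of_mem_tag hd hy with h | h
  · simp only [codeResidues, Finset.mem_insert, Finset.mem_singleton] at h; omega
  · omega

lemma mod_not_mem_shrunkResidues_of_mem_tag {d y : ℕ} (hd : 127 < d) {M : Multiset ℕ}
    (hy : y ∈ tag d M) : y % (2 * d) ∉ shrunkResidues d := by
  have := le_mod_of_mem_tag hd hy
  simp only [shrunkResidues, Finset.mem_insert, Finset.mem_singleton]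
  omega

lemma one_lt_of_mem_core {d y : ℕ} (hd : 127 < d) {M : Multiset ℕ}
    (hM : ∀ x ∈ largeParts d M, LargePart d x) (hy : y ∈ core d M) : 1 < y := by
  rcases mem_add.mp hy with hy | hy
  · obtain ⟨x, hx, rfl⟩ := mem_map.mp hy
    exact (shrink_spec (by omega) (largePart_of_mem_kept hM hx)).1
  · have := le_mod_of_mem_tag hd hy
    have := Nat.mod_le y (2 * d)
    omega

lemma count_core_le_one {d y : ℕ} (hd : 127 < d) {M : Multiset ℕ}
    (hM : ∀ x ∈ largeParts d M, LargePart d x) (hy : y % (2 * d) = flag d) :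
    (core d M).count y ≤ 1 := by
  have hshrunk : y ∉ (kept d M).map (shrink d) := fun h => by
    obtain ⟨x, hx, rfl⟩ := mem_map.mp h
    have hres := (shrink_spec (by omega) (largePart_of_mem_kept hM hx)).2.2.1
    have := flag_bounds hd
    simp only [shrunkResidues, Finset.mem_insert, Finset.mem_singleton] at hres
    omega
  rw [core, count_add, count_eq_zero.mpr hshrunk, zero_add]
  exact count_tag_le_one hd M hy

def decode (d : ℕ) (N : Multiset ℕ) : Multiset ℕ :=
  (N.filter (· % (2 * d) ∈ shrunkResidues d)).map (unshrink d) +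
    tagDecode d (N.filter (· % (2 * d) ∉ shrunkResidues d))

lemma decode_core {d : ℕ} (hd : 127 < d) {M : Multiset ℕ}
    (hM : ∀ x ∈ largeParts d M, LargePart d x) : decode d (core d M) = M.filter (· ≠ 1) := by
  have hshrunk : ∀ y ∈ (kept d M).map (shrink d), y % (2 * d) ∈ shrunkResidues d := by
    intro y hy
    obtain ⟨x, hx, rfl⟩ := mem_map.mp hy
    exact (shrink_spec (by omega) (largePart_of_mem_kept hM hx)).2.2.1
  have htag : ∀ y ∈ tag d M, y % (2 * d) ∉ shrunkResidues d :=
    fun y hy => mod_not_mem_shrunkResidues_of_mem_tag hd hy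
  rw [decode, core, filter_add, filter_add, filter_eq_self.mpr hshrunk, filter_eq_nil.mpr htag,
    filter_eq_nil.mpr fun y hy h => h (hshrunk y hy), filter_eq_self.mpr htag, add_zero,
    zero_add, map_map, map_congr (f := unshrink d ∘ shrink d) (g := id) rfl
      fun x hx => (shrink_spec (by omega) (largePart_of_mem_kept hM hx)).2.2.2,
    map_id, add_comm, tagDecode_tag_add_kept hd hM]

noncomputable def gParts (d n : ℕ) (M : Multiset ℕ) : Multiset ℕ :=
  core d M + replicate (n - (core d M).sum) 1

lemma sum_filter_ne_one_add_count (M : Multiset ℕ) :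
    (M.filter (· ≠ 1)).sum + M.count 1 = M.sum := by
  conv_rhs => rw [← filter_add_not (· ≠ 1) M]
  simp [filter_eq', add_comm]

lemma eq_of_sum_eq_of_filter_ne_one_eq {M N : Multiset ℕ} (hsum : M.sum = N.sum)
    (h : M.filter (· ≠ 1) = N.filter (· ≠ 1)) : M = N := by
  have hcount : M.count 1 = N.count 1 := by
    have := sum_filter_ne_one_add_count M
    have := sum_filter_ne_one_add_count N
    rw [h] at *
    omega
  rw [← filter_add_not (· ≠ 1) M, ← filter_add_not (· ≠ 1) N, h]
  simp [filter_eq', hcount]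

lemma sum_gParts {d n : ℕ} (hd : 127 < d) {M : Multiset ℕ}
    (hM : ∀ x ∈ largeParts d M, LargePart d x) (hn : 4 * d + 2 ^ Nat.log 2 (d + 1) ≤ n)
    (hMn : M.sum = n) :
    (gParts d n M).sum = n := by
  have := sum_core_le hd hM
  have := sum_filter_ne_one_add_count M
  rw [gParts, sum_add, sum_replicate, smul_eq_mul, mul_one]
  omega

lemma mem_gParts {d n y : ℕ} (hd : 127 < d) {M : Multiset ℕ}
    (hM : ∀ x ∈ largeParts d M, LargePart d x) (hy : y ∈ gParts d n M) :
    0 < y ∧ GResidue d y := by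
  rcases mem_add.mp hy with hy | hy
  · exact ⟨by have := one_lt_of_mem_core hd hM hy; omega, gResidue_of_mem_core hd hM hy⟩
  · rw [eq_of_mem_replicate hy]
    exact ⟨one_pos, .inl (Nat.mod_eq_of_lt (by omega))⟩

lemma count_gParts_le_one {d n y : ℕ} (hd : 127 < d) {M : Multiset ℕ}
    (hM : ∀ x ∈ largeParts d M, LargePart d x) (hy : y % (2 * d) = flag d) :
    (gParts d n M).count y ≤ 1 := by
  have hy1 : y ≠ 1 := by
    rintro rfl
    have := flag_bounds hd
    rw [Nat.mod_eq_of_lt (by omega)] at hy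
    omega
  rw [gParts, count_add, count_replicate, if_neg hy1.symm, add_zero]
  exact count_core_le_one hd hM hy

lemma filter_gParts_ne_one {d n : ℕ} (hd : 127 < d) {M : Multiset ℕ}
    (hM : ∀ x ∈ largeParts d M, LargePart d x) :
    (gParts d n M).filter (· ≠ 1) = core d M := by
  rw [gParts, filter_add, filter_eq_self.mpr fun y hy => (one_lt_of_mem_core hd hM hy).ne',
    filter_eq_nil.mpr fun y hy => by simp [eq_of_mem_replicate hy], add_zero]

lemma gParts_inj {d n : ℕ} (hd : 127 < d) {M N : Multiset ℕ}
    (hM : ∀ x ∈ largeParts d M, LargePart d x) (hN : ∀ x ∈ largeParts d N, LargePart d x)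
    (hMn : M.sum = n) (hNn : N.sum = n) (h : gParts d n M = gParts d n N) : M = N := by
  refine eq_of_sum_eq_of_filter_ne_one_eq (hMn.trans hNn.symm) ?_
  rw [← decode_core hd hM, ← decode_core hd hN, ← filter_gParts_ne_one hd hM,
    ← filter_gParts_ne_one hd hN, h]

lemma largePart_of_mod {d x : ℕ} (hx : x % (d + 1) = 1 ∨ (x + 1) % (d + 1) = 0)
    (hx1 : x ≠ 1) (hxd : x ≠ d) : LargePart d x := by
  rcases hx with hx | hx
  · have := Nat.div_add_mod x (d + 1)
    refine ⟨x / (d + 1), Nat.one_le_iff_ne_zero.mpr fun h0 => hx1 ?_, .inl (by linarith)⟩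
    rw [h0, hx] at this
    omega
  · obtain ⟨k, hk⟩ := Nat.dvd_of_mod_eq_zero hx
    obtain ⟨q, rfl⟩ := Nat.exists_eq_succ_of_ne_zero (n := k) (by rintro rfl; simp at hk)
    refine ⟨q, Nat.one_le_iff_ne_zero.mpr fun h0 => hxd ?_, .inr (by linarith)⟩
    subst h0
    linarith

end GDominatesQ

open GDominatesQ in
theorem g_dominates_Q_general (d n : ℕ) (hd : 127 < d)
    (hn : 4 * d + 2 ^ (Nat.log 2 (d + 1)) ≤ n) :
    QNum 1 (d - 2) n ≤ gNum d n := by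
  have hlarge (p : n.Partition)
      (hp : ∀ x ∈ p.parts, x % (d - 2 + 3) = 1 % (d - 2 + 3) ∨ (x + 1) % (d - 2 + 3) = 0) :
      ∀ x ∈ largeParts d p.parts, LargePart d x := by
    intro x hx
    obtain ⟨hxp, hx1, hxd⟩ := by simpa [largeParts] using hx
    rw [show d - 2 + 3 = d + 1 by omega, Nat.mod_eq_of_lt (show 1 < d + 1 by omega)] at hp
    exact largePart_of_mod (hp x hxp) hx1 hxd
  refine Nat.card_le_card_of_injective
    (fun p => ⟨⟨gParts d n p.1.parts, fun hy => (mem_gParts hd (hlarge _ p.2) hy).1,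
      sum_gParts hd (hlarge _ p.2) hn p.1.parts_sum⟩,
      fun y hy => (mem_gParts hd (hlarge _ p.2) hy).2,
      fun y _ hy => count_gParts_le_one hd (hlarge _ p.2) hy⟩) ?_
  intro p q hpq
  exact Subtype.ext <| Nat.Partition.ext <| gParts_inj hd (hlarge _ p.2) (hlarge _ q.2)
    p.1.parts_sum q.1.parts_sum (congrArg (fun r => r.1.parts) hpq)

theorem g_dominates_Q (d n : ℕ) (hd : 127 < d) (hpow : ∀ r : ℕ, d ≠ 2 ^ r - 1)
    (hn : 4 * d + 2 ^ (Nat.log 2 (d + 1)) ≤ n) :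
    QNum 1 (d - 2) n ≤ gNum d n :=
  g_dominates_Q_general d n hd hn
end

section
/- Let d ≥ 4 be an even integer. Then for every positive integer n, Q_{d−1}^{(2)}(2n) ≥ Q_d^{(2)}(2n − 1). -/
def IsCongrPMTwo (m x : ℕ) : Prop := x % m = 2 % m ∨ (x + 2) % m = 0

/-- The `k` with `x = m k ± 2`, for `x ≡ ±2 (mod m)` and `m > 4`. -/
def pmTwoQuot (m x : ℕ) : ℕ := (x + 2) / m

lemma pmTwoQuot_le {m : ℕ} (hm : 3 ≤ m) (x : ℕ) : pmTwoQuot m x ≤ x :=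
  calc (x + 2) / m ≤ (x + 2) / 3 := Nat.div_le_div_left hm (by norm_num)
    _ ≤ x := by omega

lemma pmTwoQuot_mul_add_two {m : ℕ} (hm : 4 < m) (k : ℕ) : pmTwoQuot m (m * k + 2) = k := by
  rw [pmTwoQuot, add_assoc, Nat.mul_add_div (by omega), Nat.div_eq_of_lt hm, add_zero]

lemma pmTwoQuot_of_add_two_eq {m x k : ℕ} (hm : 0 < m) (h : x + 2 = m * k) :
    pmTwoQuot m x = k := by
  rw [pmTwoQuot, h, Nat.mul_div_cancel_left k hm]

namespace IsCongrPMTwo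

variable {m x : ℕ}

lemma of_eq_mul_add_two {k : ℕ} (h : x = m * k + 2) : IsCongrPMTwo m x :=
  .inl (by rw [h, Nat.mul_add_mod])

lemma of_add_two_eq_mul {k : ℕ} (h : x + 2 = m * k) : IsCongrPMTwo m x :=
  .inr (by rw [h, Nat.mul_mod_right])

lemma pos (hm : 2 < m) (h : IsCongrPMTwo m x) : 0 < x := by
  refine Nat.pos_of_ne_zero ?_
  rintro rfl
  rcases h with h | h <;> simp [Nat.mod_eq_of_lt hm] at h

lemma eq_or (hm : 4 < m) (h : IsCongrPMTwo m x) :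
    x = m * pmTwoQuot m x + 2 ∨ x + 2 = m * pmTwoQuot m x := by
  rcases h with h | h
  · obtain ⟨k, rfl⟩ : ∃ k, x = m * k + 2 := by
      refine ⟨x / m, ?_⟩
      have := Nat.div_add_mod x m
      rw [h, Nat.mod_eq_of_lt (by omega)] at this
      omega
    exact .inl (by rw [pmTwoQuot_mul_add_two hm])
  · obtain ⟨k, hk⟩ := Nat.dvd_of_mod_eq_zero h
    exact .inr (by rw [pmTwoQuot_of_add_two_eq (by omega) hk, hk])

end IsCongrPMTwo

/-- `(c + 1) k ± 2 ↦ c k ± 2`. -/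
def shrinkPart (c x : ℕ) : ℕ := x - pmTwoQuot (c + 1) x

section shrinkPart

variable {c x : ℕ}

lemma shrinkPart_add_pmTwoQuot (hc : 2 ≤ c) (x : ℕ) :
    shrinkPart c x + pmTwoQuot (c + 1) x = x :=
  Nat.sub_add_cancel (pmTwoQuot_le (by omega) x)

lemma shrinkPart_cases (hc : 4 ≤ c) (h : IsCongrPMTwo (c + 1) x) :
    shrinkPart c x = c * pmTwoQuot (c + 1) x + 2 ∨
      shrinkPart c x + 2 = c * pmTwoQuot (c + 1) x := by
  have hsum := shrinkPart_add_pmTwoQuot (c := c) (by omega) x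
  have hmul : (c + 1) * pmTwoQuot (c + 1) x = c * pmTwoQuot (c + 1) x + pmTwoQuot (c + 1) x :=
    Nat.succ_mul _ _
  rcases h.eq_or (by omega) with h | h
  · exact .inl (by omega)
  · exact .inr (by omega)

lemma IsCongrPMTwo.shrinkPart (hc : 4 ≤ c) (h : IsCongrPMTwo (c + 1) x) :
    IsCongrPMTwo c (shrinkPart c x) := by
  rcases shrinkPart_cases hc h with h | h
  · exact .of_eq_mul_add_two h
  · exact .of_add_two_eq_mul h

lemma pmTwoQuot_shrinkPart (hc : 5 ≤ c) (h : IsCongrPMTwo (c + 1) x) :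
    pmTwoQuot c (shrinkPart c x) = pmTwoQuot (c + 1) x := by
  rcases shrinkPart_cases (by omega) h with h | h
  · rw [h, pmTwoQuot_mul_add_two (by omega)]
  · exact pmTwoQuot_of_add_two_eq (by omega) h

lemma shrinkPart_add_pmTwoQuot_shrinkPart (hc : 5 ≤ c) (h : IsCongrPMTwo (c + 1) x) :
    shrinkPart c x + pmTwoQuot c (shrinkPart c x) = x := by
  rw [pmTwoQuot_shrinkPart hc h, shrinkPart_add_pmTwoQuot (by omega)]

lemma two_dvd_shrinkPart (hc : 4 ≤ c) (hce : 2 ∣ c) (h : IsCongrPMTwo (c + 1) x) :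
    2 ∣ shrinkPart c x := by
  have hck : 2 ∣ c * pmTwoQuot (c + 1) x := hce.mul_right _
  rcases shrinkPart_cases hc h with h | h <;> omega

end shrinkPart

def shiftParts (c : ℕ) (s : Multiset ℕ) : Multiset ℕ :=
  s.map (shrinkPart c) + Multiset.replicate (((s.map (pmTwoQuot (c + 1))).sum + 1) / 2) 2

section shiftParts

variable {c : ℕ} {s : Multiset ℕ}

lemma isCongrPMTwo_of_mem_shiftParts (hc : 4 ≤ c) (hs : ∀ x ∈ s, IsCongrPMTwo (c + 1) x) :
    ∀ y ∈ shiftParts c s, IsCongrPMTwo c y := by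
  intro y hy
  rcases Multiset.mem_add.mp hy with hy | hy
  · obtain ⟨x, hx, rfl⟩ := Multiset.mem_map.mp hy
    exact (hs x hx).shrinkPart hc
  · rw [Multiset.eq_of_mem_replicate hy]
    exact .inl rfl

lemma sum_shiftParts (hc : 4 ≤ c) (hce : 2 ∣ c) (hs : ∀ x ∈ s, IsCongrPMTwo (c + 1) x)
    (hodd : Odd s.sum) : (shiftParts c s).sum = s.sum + 1 := by
  have hsplit : (s.map (shrinkPart c)).sum + (s.map (pmTwoQuot (c + 1))).sum = s.sum := by
    rw [← Multiset.sum_map_add]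
    conv_rhs => rw [← Multiset.map_id' s]
    exact congrArg _ (Multiset.map_congr rfl fun x _ => shrinkPart_add_pmTwoQuot (by omega) x)
  have heven : 2 ∣ (s.map (shrinkPart c)).sum := Multiset.dvd_sum fun y hy => by
    obtain ⟨x, hx, rfl⟩ := Multiset.mem_map.mp hy
    exact two_dvd_shrinkPart hc hce (hs x hx)
  obtain ⟨r, hr⟩ := hodd
  rw [shiftParts, Multiset.sum_add, Multiset.sum_replicate, smul_eq_mul]
  omega

lemma sum_map_pmTwoQuot_shiftParts (hc : 5 ≤ c) (hs : ∀ x ∈ s, IsCongrPMTwo (c + 1) x) :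
    ((shiftParts c s).map (pmTwoQuot c)).sum = (s.map (pmTwoQuot (c + 1))).sum := by
  have htwo : pmTwoQuot c 2 = 0 := Nat.div_eq_of_lt (by omega)
  rw [shiftParts, Multiset.map_add, Multiset.sum_add, Multiset.map_replicate, htwo,
    Multiset.sum_replicate, smul_zero, add_zero, Multiset.map_map]
  exact congrArg _ (Multiset.map_congr rfl fun x hx => pmTwoQuot_shrinkPart hc (hs x hx))

lemma shiftParts_injOn (hc : 5 ≤ c) :
    Set.InjOn (shiftParts c) {s | ∀ x ∈ s, IsCongrPMTwo (c + 1) x} := by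
  have hinv : ∀ s : Multiset ℕ, (∀ x ∈ s, IsCongrPMTwo (c + 1) x) →
      (s.map (shrinkPart c)).map (fun y => y + pmTwoQuot c y) = s := fun s hs => by
    rw [Multiset.map_map]
    conv_rhs => rw [← Multiset.map_id' s]
    exact Multiset.map_congr rfl fun x hx => shrinkPart_add_pmTwoQuot_shrinkPart hc (hs x hx)
  intro s hs t ht h
  have hK : (s.map (pmTwoQuot (c + 1))).sum = (t.map (pmTwoQuot (c + 1))).sum := by
    rw [← sum_map_pmTwoQuot_shiftParts hc hs, ← sum_map_pmTwoQuot_shiftParts hc ht, h]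
  have hshrink : s.map (shrinkPart c) = t.map (shrinkPart c) := by
    rw [shiftParts, shiftParts, hK] at h
    exact add_right_cancel h
  rw [← hinv s hs, ← hinv t ht, hshrink]

end shiftParts

theorem QNum_two_le_succ {d N : ℕ} (hd : 2 ≤ d) (hdo : Odd d) (hN : Odd N) :
    QNum 2 (d + 1) N ≤ QNum 2 d (N + 1) := by
  have hc : 5 ≤ d + 3 := by omega
  have hce : 2 ∣ d + 3 := (hdo.add_odd (by decide)).two_dvd
  let shift : {p : N.Partition // ∀ x ∈ p.parts, IsCongrPMTwo (d + 3 + 1) x} →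
      {p : (N + 1).Partition // ∀ x ∈ p.parts, IsCongrPMTwo (d + 3) x} := fun p =>
    ⟨⟨shiftParts (d + 3) p.1.parts,
      fun hy => (isCongrPMTwo_of_mem_shiftParts (by omega) p.2 _ hy).pos (by omega),
      by rw [sum_shiftParts (by omega) hce p.2 (by rw [p.1.parts_sum]; exact hN), p.1.parts_sum]⟩,
     isCongrPMTwo_of_mem_shiftParts (by omega) p.2⟩
  refine Nat.card_le_card_of_injective shift fun p q h => ?_
  exact Subtype.ext <| Nat.Partition.ext <|
    shiftParts_injOn hc p.2 q.2 (congrArg (fun r => r.1.parts) h)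

theorem Q_shift_odd_to_even (d n : ℕ) (hd : 4 ≤ d) (hde : Even d) (hn : 0 < n) :
    QNum 2 d (2 * n - 1) ≤ QNum 2 (d - 1) (2 * n) := by
  obtain ⟨e, rfl⟩ : ∃ e, d = e + 1 := ⟨d - 1, by omega⟩
  have he : Odd e := by simpa [Nat.even_add_one] using hde
  have hN : Odd (2 * n - 1) := ⟨n - 1, by omega⟩
  simpa [show 2 * n - 1 + 1 = 2 * n by omega] using QNum_two_le_succ (by omega) he hN
end

section
/- Let d ≥ 4 be an even integer and let n be an even positive integer. Then Q_{d−1}^{(2)}(n) ≥ Q_d^{(2)}(n). -/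
/-!
Write `m = d + 2`, so the moduli are `m + 1` (odd) and `m` (even). A part `(m + 1) q ± 2` of a
partition counted by the left side is replaced by `m q ± 2`, which is congruent to `±2` mod `m`;
this loses `q` from the sum. The new parts are even, as is `n`, so the total loss is even and is
made up by parts equal to `2`. The shrunken parts determine the old ones (`q` is read off as
`(m q ± 2 + 2) / m` since `m > 4`), and since both partitions sum to `n` the number of added `2`s
is determined too, so this map is injective.
-/

namespace QNum

open Multiset

def IsPlusMinusTwoMod (m x : ℕ) : Prop := x % m = 2 % m ∨ (x + 2) % m = 0

def shrink (m x : ℕ) : ℕ := x - (x + 2) / (m + 1)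

def grow (m y : ℕ) : ℕ := y + (y + 2) / m

variable {m x : ℕ}

lemma IsPlusMinusTwoMod.exists_eq {M : ℕ} (hM : 2 < M) (hx : IsPlusMinusTwoMod M x) :
    (∃ q, x = M * q + 2) ∨ ∃ q, 0 < q ∧ x + 2 = M * q := by
  rcases hx with hx | hx
  · rw [Nat.mod_eq_of_lt hM] at hx
    exact .inl ⟨x / M, by rw [← hx, Nat.div_add_mod]⟩
  · obtain ⟨q, hq⟩ := Nat.dvd_of_mod_eq_zero hx
    exact .inr ⟨q, Nat.pos_of_ne_zero (by rintro rfl; omega), hq⟩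

lemma IsPlusMinusTwoMod.shrink_eq (hm : 4 ≤ m) (hx : IsPlusMinusTwoMod (m + 1) x) :
    (∃ q, x = (m + 1) * q + 2 ∧ shrink m x = m * q + 2) ∨
      ∃ q, 0 < q ∧ x + 2 = (m + 1) * q ∧ shrink m x + 2 = m * q := by
  rcases hx.exists_eq (by omega) with ⟨q, rfl⟩ | ⟨q, hq, hxq⟩
  · refine .inl ⟨q, rfl, ?_⟩
    have hdiv : ((m + 1) * q + 2 + 2) / (m + 1) = q := by
      rw [add_assoc, Nat.mul_add_div (by omega), Nat.div_eq_of_lt (by omega), add_zero]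
    rw [shrink, hdiv, add_one_mul]
    omega
  · refine .inr ⟨q, hq, hxq, ?_⟩
    rw [shrink, hxq, Nat.mul_div_cancel_left _ (by omega)]
    rw [add_one_mul] at hxq
    have := Nat.le_mul_of_pos_right m hq
    omega

lemma IsPlusMinusTwoMod.isPlusMinusTwoMod_shrink (hm : 4 ≤ m)
    (hx : IsPlusMinusTwoMod (m + 1) x) : IsPlusMinusTwoMod m (shrink m x) := by
  rcases hx.shrink_eq hm with ⟨q, -, hs⟩ | ⟨q, -, -, hs⟩
  · exact .inl (by rw [hs, Nat.mul_add_mod])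
  · exact .inr (by rw [hs, Nat.mul_mod_right])

lemma IsPlusMinusTwoMod.even_shrink (hm : 4 ≤ m) (hme : Even m)
    (hx : IsPlusMinusTwoMod (m + 1) x) : Even (shrink m x) := by
  obtain ⟨k, rfl⟩ := hme
  rcases hx.shrink_eq hm with ⟨q, -, hs⟩ | ⟨q, hq, -, hs⟩
  · exact ⟨k * q + 1, by rw [hs]; ring⟩
  · have : 1 ≤ k * q := by nlinarith
    exact ⟨k * q - 1, by rw [add_mul] at hs; omega⟩

lemma IsPlusMinusTwoMod.shrink_pos (hm : 4 ≤ m) (hx : IsPlusMinusTwoMod (m + 1) x) :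
    0 < shrink m x := by
  rcases hx.shrink_eq hm with ⟨q, -, hs⟩ | ⟨q, hq, -, hs⟩
  · omega
  · have := Nat.le_mul_of_pos_right m hq
    omega

lemma IsPlusMinusTwoMod.grow_shrink (hm : 4 < m) (hx : IsPlusMinusTwoMod (m + 1) x) :
    grow m (shrink m x) = x := by
  rcases hx.shrink_eq hm.le with ⟨q, hxq, hs⟩ | ⟨q, -, hxq, hs⟩
  · have hdiv : (m * q + 2 + 2) / m = q := by
      rw [add_assoc, Nat.mul_add_div (by omega), Nat.div_eq_of_lt hm, add_zero]
    rw [grow, hs, hdiv, hxq, add_one_mul]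
    omega
  · rw [grow, hs, Nat.mul_div_cancel_left _ (by omega)]
    rw [add_one_mul] at hxq
    omega

end QNum

namespace Multiset

lemma eq_of_map_add_replicate_eq {g h : ℕ → ℕ} {s t : Multiset ℕ} {i j a : ℕ}
    (hs : ∀ x ∈ s, h (g x) = x) (ht : ∀ x ∈ t, h (g x) = x) (ha : h a ≠ 0)
    (hsum : s.sum = t.sum) (heq : s.map g + replicate i a = t.map g + replicate j a) :
    s = t := by
  have map_h : ∀ u : Multiset ℕ, (∀ x ∈ u, h (g x) = x) → ∀ k,
      (u.map g + replicate k a).map h = u + replicate k (h a) := fun u hu k => by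
    rw [map_add, map_map, map_congr rfl (f := h ∘ g) (g := id) hu, map_id, map_replicate]
  have heq' := congrArg (map h) heq
  rw [map_h s hs, map_h t ht] at heq'
  obtain rfl : i = j := by
    have hsums := congrArg sum heq'
    simp only [sum_add, sum_replicate, smul_eq_mul, hsum, add_right_inj] at hsums
    exact Nat.eq_of_mul_eq_mul_right (Nat.pos_of_ne_zero ha) hsums
  exact add_right_cancel heq'

end Multiset

namespace QNum

open Multiset

variable {m n : ℕ}

def shrinkParts (m : ℕ) (s : Multiset ℕ) : Multiset ℕ :=
  s.map (shrink m) + replicate ((s.sum - (s.map (shrink m)).sum) / 2) 2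

lemma forall_mem_shrinkParts {P : ℕ → Prop} {s : Multiset ℕ} (h2 : P 2)
    (hs : ∀ x ∈ s, P (shrink m x)) : ∀ y ∈ shrinkParts m s, P y := by
  intro y hy
  rcases mem_add.mp hy with hy | hy
  · obtain ⟨x, hx, rfl⟩ := mem_map.mp hy
    exact hs x hx
  · rwa [eq_of_mem_replicate hy]

lemma sum_shrinkParts {s : Multiset ℕ} (he : Even s.sum) (hs : ∀ x ∈ s, Even (shrink m x)) :
    (shrinkParts m s).sum = s.sum := by
  have hle : (s.map (shrink m)).sum ≤ s.sum := sum_map_le_sum _ fun x _ => Nat.sub_le _ _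
  have he' : Even (s.map (shrink m)).sum :=
    even_iff_two_dvd.mpr (dvd_sum fun y hy => by
      obtain ⟨x, hx, rfl⟩ := mem_map.mp hy
      exact (hs x hx).two_dvd)
  rw [shrinkParts, sum_add, sum_replicate, smul_eq_mul, mul_comm,
    Nat.two_mul_div_two_of_even (he.tsub he'), Nat.add_sub_cancel' hle]

def shrinkPartition (hm : 4 ≤ m) (hme : Even m) (hn : Even n)
    (p : {p : n.Partition // ∀ x ∈ p.parts, IsPlusMinusTwoMod (m + 1) x}) :
    {p : n.Partition // ∀ x ∈ p.parts, IsPlusMinusTwoMod m x} :=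
  ⟨{ parts := shrinkParts m p.1.parts
     parts_pos := fun hy =>
       forall_mem_shrinkParts two_pos (fun x hx => (p.2 x hx).shrink_pos hm) _ hy
     parts_sum := (sum_shrinkParts (p.1.parts_sum.symm ▸ hn)
       fun x hx => (p.2 x hx).even_shrink hm hme).trans p.1.parts_sum },
    forall_mem_shrinkParts (.inl rfl) fun x hx => (p.2 x hx).isPlusMinusTwoMod_shrink hm⟩

lemma shrinkPartition_injective (hm : 4 < m) (hme : Even m) (hn : Even n) :
    Function.Injective (shrinkPartition (n := n) hm.le hme hn) := by
  rintro ⟨p, hp⟩ ⟨q, hq⟩ h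
  have hgrow_two : grow m 2 ≠ 0 := by
    rw [grow]
    positivity
  exact Subtype.ext <| Nat.Partition.ext <| eq_of_map_add_replicate_eq (h := grow m)
    (fun x hx => (hp x hx).grow_shrink hm) (fun x hx => (hq x hx).grow_shrink hm) hgrow_two
    (p.parts_sum.trans q.parts_sum.symm) (congrArg (·.1.parts) h)

end QNum

theorem Q_shift_even_general (d n : ℕ) (hd : 4 ≤ d) (hde : Even d) (hne : Even n) :
    QNum 2 d n ≤ QNum 2 (d - 1) n := by
  rw [QNum, QNum, show d - 1 + 3 = d + 2 by omega]
  exact Nat.card_le_card_of_injective _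
    (QNum.shrinkPartition_injective (by omega) (hde.add even_two) hne)

theorem Q_shift_even (d n : ℕ) (hd : 4 ≤ d) (hde : Even d) (hn : 0 < n) (hne : Even n) :
    QNum 2 d n ≤ QNum 2 (d - 1) n :=
  Q_shift_even_general d n hd hde hne
end

section
/- Let a ≥ 3, let d ≥ a(2^{12} − 1), and set d′ = ⌈d/a⌉. Then for every positive integer n, Q_{ad′−a−3}^{(a)}(a⌈n/a⌉) ≥ Q_d^{(a)}(n). -/
/-!
A part `x ≡ ±a (mod D)` is `k * D + a` or `(k + 1) * D - a`; replacing `D` by a smaller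
modulus `M` with `a ∣ M` and `2 * a < M` shrinks it to a multiple of `a` that is `±a (mod M)`,
and the replacement is undone by rescaling back. Mapping every part this way and padding
with copies of `a` up to the next multiple `N` of `a` turns a partition of `n` into one of `N`;
rescaling back recovers the original parts plus the padding, and comparing sums shows the
padding, hence the whole partition, is recovered. With `D = d + 3` and `M = a * ⌈d / a⌉ - a`
the hypothesis on `d` gives `2 * a < M ≤ D`.
-/

theorem Multiset.eq_of_add_replicate_eq {s t : Multiset ℕ} {i j a : ℕ} (ha : 0 < a)
    (hsum : s.sum = t.sum) (h : s + replicate i a = t + replicate j a) : s = t := by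
  have hij : i = j := by
    have := congrArg Multiset.sum h
    simp only [sum_add, sum_replicate, smul_eq_mul, hsum, Nat.add_left_cancel_iff] at this
    exact Nat.eq_of_mul_eq_mul_right ha this
  exact add_right_cancel (hij ▸ h)

section Padding

variable {P Q : ℕ → Prop} {f g : ℕ → ℕ} {a n N : ℕ}

theorem card_partition_le_card_of_map_pad (ha : 0 < a) (hnN : n ≤ N) (haN : a ∣ N)
    (hf_pos : ∀ x, 0 < x → P x → 0 < f x) (hf_le : ∀ x, 0 < x → P x → f x ≤ x)
    (hf_dvd : ∀ x, 0 < x → P x → a ∣ f x) (hfQ : ∀ x, 0 < x → P x → Q (f x))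
    (hgf : ∀ x, 0 < x → P x → g (f x) = x) (hga : g a = a) (hQa : Q a) :
    Nat.card {p : n.Partition // ∀ x ∈ p.parts, P x} ≤
      Nat.card {q : N.Partition // ∀ x ∈ q.parts, Q x} := by
  let pad (p : {p : n.Partition // ∀ x ∈ p.parts, P x}) : Multiset ℕ :=
    p.1.parts.map f + Multiset.replicate ((N - (p.1.parts.map f).sum) / a) a
  have pad_pos (p) : ∀ x ∈ pad p, 0 < x := by
    simp only [pad, Multiset.mem_add, Multiset.mem_map, Multiset.mem_replicate]
    rintro x (⟨y, hy, rfl⟩ | ⟨-, rfl⟩)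
    · exact hf_pos y (p.1.parts_pos hy) (p.2 y hy)
    · exact ha
  have pad_sum (p) : (pad p).sum = N := by
    have hle : (p.1.parts.map f).sum ≤ n :=
      (Multiset.sum_map_le_sum f fun x hx => hf_le x (p.1.parts_pos hx) (p.2 x hx)).trans_eq
        p.1.parts_sum
    have hdvd : a ∣ (p.1.parts.map f).sum := Multiset.dvd_sum <| by
      simp only [Multiset.mem_map]
      rintro _ ⟨x, hx, rfl⟩
      exact hf_dvd x (p.1.parts_pos hx) (p.2 x hx)
    simp only [pad, Multiset.sum_add, Multiset.sum_replicate, smul_eq_mul,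
      Nat.div_mul_cancel (Nat.dvd_sub haN hdvd)]
    omega
  have pad_Q (p) : ∀ x ∈ pad p, Q x := by
    simp only [pad, Multiset.mem_add, Multiset.mem_map, Multiset.mem_replicate]
    rintro x (⟨y, hy, rfl⟩ | ⟨-, rfl⟩)
    · exact hfQ y (p.1.parts_pos hy) (p.2 y hy)
    · exact hQa
  have map_pad (p) : (pad p).map g =
      p.1.parts + Multiset.replicate ((N - (p.1.parts.map f).sum) / a) a := by
    rw [Multiset.map_add, Multiset.map_replicate, hga, Multiset.map_map]
    congr 1
    exact (Multiset.map_congr rfl fun x hx => hgf x (p.1.parts_pos hx) (p.2 x hx)).trans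
      (Multiset.map_id' _)
  refine Nat.card_le_card_of_injective
    (fun p => ⟨⟨pad p, pad_pos p _, pad_sum p⟩, pad_Q p⟩) fun p₁ p₂ h => ?_
  have h : pad p₁ = pad p₂ := congrArg (fun q => q.1.parts) h
  have := congrArg (Multiset.map g) h
  rw [map_pad, map_pad] at this
  exact Subtype.ext <| Nat.Partition.ext <|
    Multiset.eq_of_add_replicate_eq ha (p₁.1.parts_sum.trans p₂.1.parts_sum.symm) this

end Padding

/-- `x ≡ ±a (mod D)`; `QNum b d` counts partitions into parts `IsPMResidue (d + 3) b`. -/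
def IsPMResidue (D a x : ℕ) : Prop := x % D = a % D ∨ (x + a) % D = 0

/-- Sends `k * D + a ↦ k * M + a` and `k * D - a ↦ k * M - a`. -/
def rescale (D M a x : ℕ) : ℕ :=
  if x % D = a % D then x / D * M + a else (x + a) / D * M - a

section Rescale

variable {D M a k x : ℕ}

theorem IsPMResidue.eq_mul_add_or_eq_succ_mul_sub (h : IsPMResidue D a x) (hx : 0 < x)
    (haD : a < D) : (∃ k, x = k * D + a) ∨ ∃ k, x = (k + 1) * D - a := by
  rcases h with h | h
  · have := Nat.div_add_mod' x D
    rw [h, Nat.mod_eq_of_lt haD] at this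
    exact Or.inl ⟨x / D, this.symm⟩
  · have hxa := Nat.div_add_mod' (x + a) D
    rw [h] at hxa
    obtain ⟨k, hk⟩ := Nat.exists_eq_add_one_of_ne_zero (n := (x + a) / D) (by
      rintro h0
      rw [h0] at hxa
      omega)
    exact Or.inr ⟨k, by rw [hk] at hxa; omega⟩

theorem isPMResidue_mul_add : IsPMResidue M a (k * M + a) :=
  Or.inl (Nat.mul_add_mod_self_right k M a)

theorem isPMResidue_succ_mul_sub (haM : a ≤ M) : IsPMResidue M a ((k + 1) * M - a) :=
  Or.inr (by rw [Nat.sub_add_cancel (haM.trans (Nat.le_mul_of_pos_left M k.succ_pos)),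
    Nat.mul_mod_left])

theorem rescale_mul_add (haD : a < D) : rescale D M a (k * D + a) = k * M + a := by
  have hD : 0 < D := by omega
  rw [rescale, if_pos (Nat.mul_add_mod_self_right k D a), Nat.add_comm (k * D),
    Nat.add_mul_div_right _ _ hD, Nat.div_eq_of_lt haD, Nat.zero_add]

theorem rescale_self (haD : a < D) : rescale D M a a = a := by
  simpa using rescale_mul_add (M := M) (k := 0) haD

theorem rescale_succ_mul_sub (ha : 0 < a) (haD : 2 * a < D) :
    rescale D M a ((k + 1) * D - a) = (k + 1) * M - a := by
  have hD : 0 < D := by omega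
  have hmod : ((k + 1) * D - a) % D = D - a := by
    rw [show (k + 1) * D - a = D - a + k * D by rw [Nat.succ_mul]; omega,
      Nat.add_mul_mod_self_right, Nat.mod_eq_of_lt (by omega)]
  rw [rescale, if_neg (by rw [hmod, Nat.mod_eq_of_lt (by omega)]; omega),
    Nat.sub_add_cancel (by rw [Nat.succ_mul]; omega), Nat.mul_div_cancel _ hD]

variable (ha : 0 < a) (h2aM : 2 * a < M) (hMD : M ≤ D) (hx : 0 < x) (h : IsPMResidue D a x)
include ha h2aM hMD hx h

theorem IsPMResidue.isPMResidue_rescale : IsPMResidue M a (rescale D M a x) := by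
  obtain ⟨k, rfl⟩ | ⟨k, rfl⟩ := h.eq_mul_add_or_eq_succ_mul_sub hx (by omega)
  · rw [rescale_mul_add (by omega)]
    exact isPMResidue_mul_add
  · rw [rescale_succ_mul_sub ha (by omega)]
    exact isPMResidue_succ_mul_sub (by omega)

theorem IsPMResidue.rescale_pos : 0 < rescale D M a x := by
  obtain ⟨k, rfl⟩ | ⟨k, rfl⟩ := h.eq_mul_add_or_eq_succ_mul_sub hx (by omega)
  · rw [rescale_mul_add (by omega)]
    omega
  · rw [rescale_succ_mul_sub ha (by omega)]
    have : M ≤ (k + 1) * M := Nat.le_mul_of_pos_left M k.succ_pos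
    omega

theorem IsPMResidue.rescale_le : rescale D M a x ≤ x := by
  obtain ⟨k, rfl⟩ | ⟨k, rfl⟩ := h.eq_mul_add_or_eq_succ_mul_sub hx (by omega)
  · rw [rescale_mul_add (by omega)]
    gcongr
  · rw [rescale_succ_mul_sub ha (by omega)]
    gcongr

theorem IsPMResidue.dvd_rescale (haM : a ∣ M) : a ∣ rescale D M a x := by
  obtain ⟨k, rfl⟩ | ⟨k, rfl⟩ := h.eq_mul_add_or_eq_succ_mul_sub hx (by omega)
  · rw [rescale_mul_add (by omega)]
    exact (haM.mul_left k).add dvd_rfl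
  · rw [rescale_succ_mul_sub ha (by omega)]
    exact Nat.dvd_sub (haM.mul_left _) dvd_rfl

theorem IsPMResidue.rescale_rescale : rescale M D a (rescale D M a x) = x := by
  obtain ⟨k, rfl⟩ | ⟨k, rfl⟩ := h.eq_mul_add_or_eq_succ_mul_sub hx (by omega)
  · rw [rescale_mul_add (by omega), rescale_mul_add (by omega)]
  · rw [rescale_succ_mul_sub ha (by omega), rescale_succ_mul_sub ha h2aM]

end Rescale

theorem card_isPMResidue_partition_le {D M a n N : ℕ} (ha : 0 < a) (h2aM : 2 * a < M)
    (hMD : M ≤ D) (haM : a ∣ M) (hnN : n ≤ N) (haN : a ∣ N) :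
    Nat.card {p : n.Partition // ∀ x ∈ p.parts, IsPMResidue D a x} ≤
      Nat.card {q : N.Partition // ∀ x ∈ q.parts, IsPMResidue M a x} :=
  card_partition_le_card_of_map_pad (f := rescale D M a) (g := rescale M D a) ha hnN haN
    (fun _ hx h => h.rescale_pos ha h2aM hMD hx) (fun _ hx h => h.rescale_le ha h2aM hMD hx)
    (fun _ hx h => h.dvd_rescale ha h2aM hMD hx haM)
    (fun _ hx h => h.isPMResidue_rescale ha h2aM hMD hx)
    (fun _ hx h => h.rescale_rescale ha h2aM hMD hx) (rescale_self (by omega)) (Or.inl rfl)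

theorem Q_level_a_shift_general (a d n : ℕ) (ha : 3 ≤ a) (hd : a * (2 ^ 12 - 1) ≤ d) :
    QNum a d n ≤ QNum a (a * ((d + a - 1) / a) - a - 3) (a * ((n + a - 1) / a)) := by
  have ha0 : 0 < a := by omega
  have hd_le : d ≤ a * ((d + a - 1) / a) := le_smul_ceilDiv ha0
  have hle_d : a * ((d + a - 1) / a) ≤ d + a - 1 := Nat.mul_div_le _ _
  have hM : a * ((d + a - 1) / a) - a - 3 + 3 = a * ((d + a - 1) / a) - a := by omega
  rw [QNum, QNum, hM]
  exact card_isPMResidue_partition_le ha0 (by omega) (by omega)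
    (Nat.dvd_sub (dvd_mul_right _ _) dvd_rfl) (le_smul_ceilDiv ha0) (dvd_mul_right _ _)

theorem Q_level_a_shift (a d n : ℕ) (ha : 3 ≤ a) (hd : a * (2 ^ 12 - 1) ≤ d)
    (hn : 0 < n) :
    QNum a d n ≤ QNum a (a * ((d + a - 1) / a) - a - 3) (a * ((n + a - 1) / a)) :=
  Q_level_a_shift_general a d n ha hd
end

section
/- Let d ≥ 3 be an integer. For every integer n with d+4 ≤ n ≤ 3d+2, the number of partitions of n into parts whose pairwise differences are at least d equals 1 + ⌊(n−d)/2⌋; explicitly, the partitions counted are (n) together with (n−y, y) for 1 ≤ y ≤ ⌊(n−d)/2⌋. -/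
theorem List.length_le_two_of_pairwise_le_max_sub_min {d : ℕ} {l : List ℕ}
    (hpos : ∀ x ∈ l, 0 < x) (hsep : l.Pairwise fun x y => d ≤ max x y - min x y)
    (hsum : l.sum < 3 * d + 3) : l.length ≤ 2 := by
  match l, hpos, hsep, hsum with
  | [], _, _, _ | [_], _, _, _ | [_, _], _, _, _ => simp
  | x :: y :: z :: t, hpos, hsep, hsum =>
    simp only [List.pairwise_cons, List.mem_cons] at hsep
    have := hpos x (by simp); have := hpos y (by simp); have := hpos z (by simp)
    have hxy := hsep.1 y (by simp); have hxz := hsep.1 z (by simp)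
    have hyz := hsep.2.1 z (by simp)
    simp only [List.sum_cons] at hsum
    omega

namespace Nat.Partition

/-- The partition `(n - y, y)`; since `ofSums` drops zero parts, `pair n 0` is `(n)`. -/
def pair (n y : ℕ) (hy : y ≤ n) : n.Partition :=
  ofSums n {n - y, y} (by simp; omega)

variable {n d : ℕ}

theorem pair_parts (y : ℕ) (hy : y ≤ n) :
    (pair n y hy).parts = ({n - y, y} : Multiset ℕ).filter (· ≠ 0) := rfl

theorem pair_parts_of_pos {y : ℕ} (hy₀ : 0 < y) (hy : y < n) :
    (pair n y hy.le).parts = {n - y, y} := by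
  rw [pair_parts, Multiset.filter_eq_self]
  simp only [Multiset.insert_eq_cons, Multiset.mem_cons, Multiset.mem_singleton, ne_eq,
    forall_eq_or_imp, forall_eq]
  omega

theorem mem_pair_parts {x y : ℕ} (hy : y ≤ n) :
    x ∈ (pair n y hy).parts ↔ (x = n - y ∨ x = y) ∧ x ≠ 0 := by
  simp [pair_parts]

theorem pairwise_pair_parts {y : ℕ} (hy : 2 * y ≤ n - d) :
    (pair n y (by omega)).parts.Pairwise fun a b => d ≤ max a b - min a b := by
  rcases Nat.eq_zero_or_pos y with rfl | hy₀
  · rcases Nat.eq_zero_or_pos n with rfl | hn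
    · simp
    · rw [pair_parts, show ({n - 0, 0} : Multiset ℕ).filter (· ≠ 0) = {n} by
        simp [hn.ne', Multiset.filter_singleton]]
      exact ⟨[n], rfl, List.pairwise_singleton _ _⟩
  · rw [pair_parts_of_pos hy₀ (by omega)]
    exact ⟨[n - y, y], rfl, List.pairwise_pair.2 (by omega)⟩

theorem eq_of_pair_eq_pair (hd : 0 < d) {y₁ y₂ : ℕ} (h₁ : 2 * y₁ ≤ n - d)
    (h₂ : 2 * y₂ ≤ n - d) (h : pair n y₁ (by omega) = pair n y₂ (by omega)) : y₁ = y₂ := by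
  -- A positive `b` is a part of `pair n b`, and `n - a` is too large to be `b`.
  have key (a b : ℕ) (ha : 2 * a ≤ n - d) (hb : 2 * b ≤ n - d)
      (hab : pair n a (by omega) = pair n b (by omega)) (hb₀ : 0 < b) : b = a := by
    have hmem : b ∈ (pair n a (by omega)).parts := by
      rw [hab, mem_pair_parts]
      omega
    rw [mem_pair_parts] at hmem
    omega
  rcases Nat.eq_zero_or_pos y₁ with hy₁ | hy₁ <;> rcases Nat.eq_zero_or_pos y₂ with hy₂ | hy₂
  · omega
  · exact (key _ _ h₁ h₂ h hy₂).symm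
  · exact key _ _ h₂ h₁ h.symm hy₁
  · exact (key _ _ h₁ h₂ h hy₂).symm

theorem exists_eq_pair (hn : n ≤ 3 * d + 2) (p : n.Partition)
    (hp : p.parts.Pairwise fun a b => d ≤ max a b - min a b) :
    ∃ (y : ℕ) (hy : 2 * y ≤ n - d), p = pair n y (by omega) := by
  obtain ⟨l, hl, hsep⟩ := hp
  have hpos : ∀ x ∈ l, 0 < x := fun x hx => p.parts_pos (hl ▸ hx)
  have hsum : l.sum = n := by rw [← Multiset.sum_coe, ← hl, p.parts_sum]
  have hlen := l.length_le_two_of_pairwise_le_max_sub_min hpos hsep (by omega)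
  match l, hl, hpos, hsep, hsum, hlen with
  | [], _, _, _, hsum, _ =>
    rw [List.sum_nil] at hsum
    subst hsum
    exact ⟨0, by omega, Nat.Partition.ext (by simp)⟩
  | [x], hl, hpos, _, hsum, _ =>
    have hx := hpos x (by simp)
    simp only [List.sum_cons, List.sum_nil, add_zero] at hsum
    refine ⟨0, by omega, Nat.Partition.ext ?_⟩
    simp [hl, pair_parts, ← hsum, hx.ne']
  | [x, z], hl, hpos, hsep, hsum, _ =>
    have := hpos x (by simp); have := hpos z (by simp)
    rw [List.pairwise_pair] at hsep
    simp only [List.sum_cons, List.sum_nil, add_zero] at hsum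
    refine ⟨min x z, by omega, Nat.Partition.ext ?_⟩
    rw [hl, pair_parts_of_pos (by omega) (by omega)]
    rcases le_total x z with h | h
    · rw [min_eq_left h, show n - x = z by omega]
      exact Multiset.pair_comm x z
    · rw [min_eq_right h, show n - z = x by omega]
      rfl

theorem card_pairwise_le_max_sub_min (hd : 0 < d) (hn : n ≤ 3 * d + 2) :
    Nat.card {p : n.Partition // p.parts.Pairwise fun a b => d ≤ max a b - min a b} =
      (n - d) / 2 + 1 := by
  let f (y : Fin ((n - d) / 2 + 1)) :
      {p : n.Partition // p.parts.Pairwise fun a b => d ≤ max a b - min a b} :=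
    ⟨pair n y (by omega), pairwise_pair_parts (by omega)⟩
  rw [← Nat.card_fin ((n - d) / 2 + 1)]
  refine (Nat.card_eq_of_bijective f ⟨fun y₁ y₂ h => ?_, fun ⟨p, hp⟩ => ?_⟩).symm
  · exact Fin.ext (eq_of_pair_eq_pair hd (by omega) (by omega) (congrArg Subtype.val h))
  · obtain ⟨y, hy, rfl⟩ := exists_eq_pair hn p hp
    exact ⟨⟨y, by omega⟩, rfl⟩

end Nat.Partition

theorem count_two_part_range_general (d n : ℕ) (hd : 3 ≤ d)
    (h2 : n ≤ 3 * d + 2) :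
    qNum 1 d n = 1 + (n - d) / 2 := by
  have hpos (p : n.Partition) : ∀ x ∈ p.parts, 1 ≤ x := fun _ hx => p.parts_pos hx
  rw [qNum, add_comm, ← Nat.Partition.card_pairwise_le_max_sub_min (by omega) h2]
  exact Nat.card_congr (Equiv.subtypeEquivRight fun p => and_iff_right (hpos p))

theorem count_two_part_range (d n : ℕ) (hd : 3 ≤ d) (h1 : d + 4 ≤ n)
    (h2 : n ≤ 3 * d + 2) :
    qNum 1 d n = 1 + (n - d) / 2 :=
  count_two_part_range_general d n hd h2
end
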